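/- arXiv:1201.5713 — 9 statements merged into one kernel-verified Lean document; each statement's English description precedes it below -/
import Mathlib

section
/- Let P be a tame power series and let (n_m) be a strictly increasing sequence of nonnegative integers such that X_{n_m}(P) converges coefficientwise to an opposite series a = ∑ a_k s^k. Then X_{n_m − 1}(P) also converges coefficientwise, and its limit τ_Ω(a) satisfies τ_Ω(a) = (a − 1)/(a_1 s), i.e. the k-th coefficient of τ_Ω(a) equals a_{k+1}/a_1. In particular the limit depends only on a, and τ_Ω maps Ω(P) into Ω(P). -/
open Filter

/-- Tameness of a coefficient sequence: `γ n ≠ 0` and `u ≤ |γ (n-1) / γ n| ≤ v`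
    for all `n ≥ N`. -/
def Tame (γ : ℕ → ℂ) (u v : ℝ) (N : ℕ) : Prop :=
  0 < u ∧ 0 < v ∧ (∀ n ≥ N, γ n ≠ 0) ∧
    ∀ n ≥ N + 1, u ≤ ‖γ (n - 1) / γ n‖ ∧ ‖γ (n - 1) / γ n‖ ≤ v

/-- The opposite polynomial `X_n(P) = ∑_{k=0}^n (γ_{n-k}/γ_n) s^k`, viewed as its
    coefficient sequence in `ℂ[[s]] ≅ (ℕ → ℂ)` with the product topology. -/
noncomputable def oppPoly (γ : ℕ → ℂ) (n : ℕ) : ℕ → ℂ :=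
  fun k => if k ≤ n then γ (n - k) / γ n else 0

/-- The space `Ω(P)` of opposite series: the set of cluster points of the sequence
    of opposite polynomials in the coefficientwise (product) topology. -/
def OmegaP (γ : ℕ → ℂ) : Set (ℕ → ℂ) :=
  {a | MapClusterPt a atTop (oppPoly γ)}


/-- If `X_{n_m}(P)` converges coefficientwise to `a ∈ Ω(P)`, then `X_{n_m - 1}(P)`
    converges to the series `τ_Ω(a)` with coefficients `k ↦ a (k+1) / a 1`; in
    particular the limit depends only on `a`, and it again belongs to `Ω(P)`. -/
theorem tauOmega_well_defined (γ : ℕ → ℂ) (u v : ℝ) (N : ℕ) (h : Tame γ u v N)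
    (n : ℕ → ℕ) (hmono : StrictMono n) (a : ℕ → ℂ)
    (hconv : Tendsto (fun m => oppPoly γ (n m)) atTop (nhds a)) :
    Tendsto (fun m => oppPoly γ (n m - 1)) atTop (nhds (fun k => a (k + 1) / a 1)) ∧
      (fun k => a (k + 1) / a 1) ∈ OmegaP γ := by
  obtain ⟨hu, hv, hγ, hbd⟩ := h
  have hn : Tendsto n atTop atTop := hmono.tendsto_atTop
  -- coordinatewise convergence of the given sequence
  have hcoord : ∀ k, Tendsto (fun m => oppPoly γ (n m) k) atTop (nhds (a k)) := by
    intro k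
    exact (tendsto_pi_nhds.1 hconv) k
  -- eventually n m ≥ anything
  have hev : ∀ M : ℕ, ∀ᶠ m in atTop, M ≤ n m := fun M => hn.eventually_ge_atTop M
  -- a 1 ≠ 0
  have ha1 : a 1 ≠ 0 := by
    have h1 : ∀ᶠ m in atTop, u ≤ ‖oppPoly γ (n m) 1‖ := by
      filter_upwards [hev (N + 1)] with m hm
      have h1le : 1 ≤ n m := le_trans (Nat.le_add_left 1 N) hm
      simp only [oppPoly, if_pos h1le]
      exact (hbd (n m) hm).1
    have := ge_of_tendsto ((hcoord 1).norm) h1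
    intro h0
    rw [h0] at this
    simp at this
    linarith
  have htend : Tendsto (fun m => oppPoly γ (n m - 1)) atTop
      (nhds (fun k => a (k + 1) / a 1)) := by
    rw [tendsto_pi_nhds]
    intro k
    have hkey : ∀ᶠ m in atTop,
        oppPoly γ (n m - 1) k = oppPoly γ (n m) (k + 1) / oppPoly γ (n m) 1 := by
      filter_upwards [hev (N + 1), hev (k + 1)] with m hmN hmk
      have h1le : 1 ≤ n m := le_trans (Nat.le_add_left 1 N) hmN
      have hk1 : k + 1 ≤ n m := hmk
      have hknm1 : k ≤ n m - 1 := by omega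
      have hγn : γ (n m) ≠ 0 := hγ _ (by omega)
      have hγn1 : γ (n m - 1) ≠ 0 := hγ _ (by omega)
      simp only [oppPoly, if_pos h1le, if_pos hk1, if_pos hknm1]
      have : n m - (k + 1) = n m - 1 - k := by omega
      rw [this]
      field_simp
    exact ((hcoord (k + 1)).div (hcoord 1) ha1).congr'
      (hkey.mono fun m hm => hm.symm)
  have hφ : Tendsto (fun m => n m - 1) atTop atTop := by
    refine tendsto_atTop_atTop.2 fun M => ?_
    obtain ⟨i, hi⟩ := eventually_atTop.1 (hn.eventually_ge_atTop (M + 1))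
    exact ⟨i, fun b hb => by have := hi b hb; omega⟩
  exact ⟨htend, MapClusterPt.of_comp hφ htend.mapClusterPt⟩
end

section
/- The radius of convergence of any opposite series a(s) ∈ Ω(P) of a tame power series P is at least 1/sup{|z| : z ∈ Ω₁(P)}, where Ω₁(P) is the accumulation set of the sequence γ_{n−1}/γ_n. -/
open Filter

/-- The set `Ω₁(P)` of accumulation values of the ratios `γ_{n-1}/γ_n`. -/
def Omega1 (γ : ℕ → ℂ) : Set ℂ :=
  {z | MapClusterPt z atTop (fun n => γ (n - 1) / γ n)}

/-!
Beyond every radius `r > sup ‖Ω₁(P)‖` the ratios `γ_{n-1}/γ_n` are eventually of norm `< r`: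
otherwise, as they stay in the compact disc of radius `v`, they would accumulate at a point of
norm `≥ r`. Telescoping, `‖γ_{n-k}/γ_n‖ ≤ r^k` for `n` large, so every coefficient `a_k` of a
limit of opposite polynomials satisfies `‖a_k‖ ≤ r^k`, and `∑ a_k z^k` is dominated by a
geometric series as soon as `r‖z‖ < 1`.
-/

section ClusterPoints

variable {ι E : Type*} [SeminormedAddGroup E] {l : Filter ι} {f : ι → E}

lemma MapClusterPt.norm_le {x : E} {B : ℝ} (hx : MapClusterPt x l f)
    (hB : ∀ᶠ i in l, ‖f i‖ ≤ B) : ‖x‖ ≤ B :=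
  (isClosed_le continuous_norm continuous_const).mem_of_mapClusterPt hx hB

lemma eventually_norm_lt_of_forall_mapClusterPt [ProperSpace E] {B r : ℝ}
    (hB : ∀ᶠ i in l, ‖f i‖ ≤ B) (hr : ∀ x, MapClusterPt x l f → ‖x‖ < r) :
    ∀ᶠ i in l, ‖f i‖ < r := by
  have hball : Tendsto f l (nhdsSet (Metric.ball 0 r)) :=
    (isCompact_closedBall (0 : E) B).tendsto_nhdsSet_of_mapClusterPt (by simpa using hB)
      fun x _ hx => by simpa using hr x hx
  filter_upwards [hball (Metric.isOpen_ball.mem_nhdsSet.2 subset_rfl)] with i hi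
  exact mem_ball_zero_iff.1 hi

end ClusterPoints

lemma norm_div_le_pow_of_norm_ratio_le {K : Type*} [NormedDivisionRing K] {γ : ℕ → K}
    {M : ℕ} {r : ℝ} (hne : ∀ m ≥ M, γ m ≠ 0) (hratio : ∀ m ≥ M + 1, ‖γ (m - 1) / γ m‖ ≤ r)
    (k n : ℕ) (hn : M + k ≤ n) : ‖γ (n - k) / γ n‖ ≤ r ^ k := by
  induction k generalizing n with
  | zero => simp [div_self (hne n (by omega))]
  | succ k ih =>
    have hstep : ‖γ (n - k - 1) / γ (n - k)‖ ≤ r := hratio (n - k) (by omega)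
    calc ‖γ (n - (k + 1)) / γ n‖
        = ‖γ (n - k - 1) / γ (n - k)‖ * ‖γ (n - k) / γ n‖ := by
          rw [← norm_mul, div_mul_div_cancel₀ (hne (n - k) (by omega)), Nat.sub_sub]
      _ ≤ r * r ^ k :=
          mul_le_mul hstep (ih n (by omega)) (norm_nonneg _) ((norm_nonneg _).trans hstep)
      _ = r ^ (k + 1) := (pow_succ' r k).symm

lemma norm_le_pow_of_mem_omegaP {γ : ℕ → ℂ} {a : ℕ → ℂ} (ha : a ∈ OmegaP γ) {M : ℕ} {r : ℝ}
    (hne : ∀ m ≥ M, γ m ≠ 0) (hratio : ∀ m ≥ M + 1, ‖γ (m - 1) / γ m‖ ≤ r) (k : ℕ) :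
    ‖a k‖ ≤ r ^ k := by
  have hk : MapClusterPt (a k) atTop (fun n => oppPoly γ n k) :=
    ha.continuousAt_comp (continuous_apply k).continuousAt
  refine hk.norm_le ?_
  filter_upwards [eventually_ge_atTop (M + k)] with n hn
  simpa [oppPoly, show k ≤ n by omega] using norm_div_le_pow_of_norm_ratio_le hne hratio k n hn

lemma summable_mul_pow_of_norm_le_pow {K : Type*} [NormedDivisionRing K] [CompleteSpace K]
    {a : ℕ → K} {r : ℝ} (ha : ∀ k, ‖a k‖ ≤ r ^ k) {z : K}
    (hz : r * ‖z‖ < 1) : Summable fun k => a k * z ^ k := by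
  have hr : 0 ≤ r := (norm_nonneg _).trans (by simpa using ha 1)
  refine (summable_geometric_of_lt_one (by positivity) hz).of_norm_bounded fun k => ?_
  rw [norm_mul, norm_pow, mul_pow]
  exact mul_le_mul_of_nonneg_right (ha k) (by positivity)

/-- Every opposite series converges (at least) on the open disc of radius
    `1 / sup {|z| : z ∈ Ω₁(P)}`. -/
theorem opposite_series_radius (γ : ℕ → ℂ) (u v : ℝ) (N : ℕ) (h : Tame γ u v N)
    (a : ℕ → ℂ) (ha : a ∈ OmegaP γ) (z : ℂ)
    (hz : ‖z‖ < 1 / sSup ((fun w => ‖w‖) '' Omega1 γ)) :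
    Summable (fun k => a k * z ^ k) := by
  obtain ⟨-, -, hne, hbd⟩ := h
  set S := sSup ((fun w => ‖w‖) '' Omega1 γ)
  have hS : 0 < S := one_div_pos.mp ((norm_nonneg z).trans_lt hz)
  obtain ⟨t, hzt, htS⟩ := exists_between hz
  have ht : 0 < t := (norm_nonneg z).trans_lt hzt
  have hbdd : ∀ᶠ n in atTop, ‖γ (n - 1) / γ n‖ ≤ v :=
    (eventually_ge_atTop (N + 1)).mono fun n hn => (hbd n hn).2
  have hOmega1 : BddAbove ((fun w => ‖w‖) '' Omega1 γ) := by
    refine ⟨v, ?_⟩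
    rintro _ ⟨w, hw, rfl⟩
    exact MapClusterPt.norm_le hw hbdd
  have hev : ∀ᶠ n in atTop, ‖γ (n - 1) / γ n‖ < 1 / t :=
    eventually_norm_lt_of_forall_mapClusterPt hbdd fun w hw =>
      (le_csSup hOmega1 ⟨w, hw, rfl⟩).trans_lt ((lt_one_div ht hS).1 htS)
  obtain ⟨M, hM⟩ := eventually_atTop.1 hev
  have hcoeff := norm_le_pow_of_mem_omegaP (M := max M N) ha
    (fun m hm => hne m (le_of_max_le_right hm)) fun m hm => (hM m (by omega)).le
  refine summable_mul_pow_of_norm_le_pow hcoeff ?_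
  rwa [one_div_mul_eq_div, div_lt_one ht]
end

section
/- Let P be tame and Q(t) = ∑ q_n t^n a power series whose radius of convergence r_Q satisfies r_Q > R_P := 1/liminf |γ_n|^{1/n}. Then P + Q is tame and Ω(P + Q) = Ω(P). -/
open Filter

open Topology

/-!
Tameness traps `‖γ n‖` between two geometric sequences, so `liminf ‖γ n‖^{1/n}` is positive and
finite, and `c > 1 / liminf ‖γ n‖^{1/n}` forces `‖γ n‖ > c⁻ⁿ` eventually; summability of
`‖q n‖ cⁿ` then gives `q n / γ n → 0`. Writing `γ n + q n = γ n (1 + q n / γ n)`, each shifted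
ratio `(γ + q)(n - k) / (γ + q)(n)` is `γ(n - k) / γ n` times a factor tending to `1`. For `k = 1`
this preserves tameness; for fixed `k`, since `‖γ(n - k) / γ n‖ ≤ vᵏ`, it makes the `k`-th
coefficients of the opposite polynomials of `P + Q` and of `P` differ by a null sequence, so the
two sequences of opposite polynomials have the same cluster points.
-/

theorem MapClusterPt.of_tendsto_sub {α X : Type*} [TopologicalSpace X] [AddGroup X]
    [ContinuousAdd X] {F : Filter α} {f g : α → X} {a : X} (ha : MapClusterPt a F f)
    (h : Tendsto (fun n => g n - f n) F (𝓝 0)) : MapClusterPt a F g := by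
  rw [mapClusterPt_iff_frequently] at ha ⊢
  intro s hs
  have hadd : (fun p : X × X => p.1 + p.2) ⁻¹' s ∈ 𝓝 (0, a) :=
    continuous_add.continuousAt.preimage_mem_nhds (by simpa using hs)
  obtain ⟨W, hW, U, hU, hWU⟩ := mem_nhds_prod_iff.1 hadd
  refine ((ha U hU).and_eventually (h hW)).mono fun n ⟨hfn, hgfn⟩ => ?_
  simpa only [Set.mem_preimage, sub_add_cancel] using hWU (Set.mk_mem_prod hgfn hfn)

theorem mapClusterPt_iff_of_tendsto_sub {α X : Type*} [TopologicalSpace X] [AddGroup X]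
    [IsTopologicalAddGroup X] {F : Filter α} {f g : α → X}
    (h : Tendsto (fun n => f n - g n) F (𝓝 0)) {a : X} :
    MapClusterPt a F f ↔ MapClusterPt a F g :=
  ⟨fun ha => ha.of_tendsto_sub (by simpa using h.neg), fun ha => ha.of_tendsto_sub h⟩

section RootTest

variable {a : ℕ → ℝ}

theorem tendsto_rpow_one_div_natCast {C : ℝ} (hC : C ≠ 0) :
    Tendsto (fun n : ℕ => C ^ (1 / (n : ℝ))) atTop (𝓝 1) := by
  simpa using tendsto_const_nhds.rpow tendsto_one_div_atTop_nhds_zero_nat (Or.inl hC)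

theorem eventually_lt_rpow_one_div_of_mul_pow_le {C w w' : ℝ} (hC : 0 < C) (hw : 0 ≤ w)
    (hw' : w' < w) (h : ∀ᶠ n in atTop, C * w ^ n ≤ a n) :
    ∀ᶠ n in atTop, w' < a n ^ (1 / (n : ℝ)) := by
  have hlim : Tendsto (fun n : ℕ => C ^ (1 / (n : ℝ)) * w) atTop (𝓝 w) := by
    simpa using (tendsto_rpow_one_div_natCast hC.ne').mul_const w
  filter_upwards [h, hlim.eventually (eventually_gt_nhds hw'), eventually_ne_atTop 0]
    with n hn hlt hn0
  calc w' < C ^ (1 / (n : ℝ)) * w := hlt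
    _ = (C * w ^ n) ^ (1 / (n : ℝ)) := by
      rw [Real.mul_rpow hC.le (by positivity), one_div, Real.pow_rpow_inv_natCast hw hn0]
    _ ≤ a n ^ (1 / (n : ℝ)) := Real.rpow_le_rpow (by positivity) hn (by positivity)

theorem eventually_rpow_one_div_lt_of_le_mul_pow {B w w' : ℝ} (ha : ∀ n, 0 ≤ a n) (hB : 0 < B)
    (hw : 0 ≤ w) (hw' : w < w') (h : ∀ᶠ n in atTop, a n ≤ B * w ^ n) :
    ∀ᶠ n in atTop, a n ^ (1 / (n : ℝ)) < w' := by
  have hlim : Tendsto (fun n : ℕ => B ^ (1 / (n : ℝ)) * w) atTop (𝓝 w) := by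
    simpa using (tendsto_rpow_one_div_natCast hB.ne').mul_const w
  filter_upwards [h, hlim.eventually (eventually_lt_nhds hw'), eventually_ne_atTop 0]
    with n hn hlt hn0
  calc a n ^ (1 / (n : ℝ)) ≤ (B * w ^ n) ^ (1 / (n : ℝ)) :=
        Real.rpow_le_rpow (ha n) hn (by positivity)
    _ = B ^ (1 / (n : ℝ)) * w := by
      rw [Real.mul_rpow hB.le (by positivity), one_div, Real.pow_rpow_inv_natCast hw hn0]
    _ < w' := hlt

theorem liminf_rpow_one_div_pos {C B w W : ℝ} (ha : ∀ n, 0 ≤ a n) (hC : 0 < C) (hB : 0 < B)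
    (hw : 0 < w) (hW : 0 ≤ W) (hlow : ∀ᶠ n in atTop, C * w ^ n ≤ a n)
    (hup : ∀ᶠ n in atTop, a n ≤ B * W ^ n) :
    0 < liminf (fun n => a n ^ (1 / (n : ℝ))) atTop := by
  have hcob : IsCoboundedUnder (· ≥ ·) atTop (fun n => a n ^ (1 / (n : ℝ))) :=
    isCoboundedUnder_ge_of_eventually_le atTop
      ((eventually_rpow_one_div_lt_of_le_mul_pow ha hB hW (lt_add_one W) hup).mono
        fun _ => le_of_lt)
  refine (half_pos hw).trans_le (le_liminf_of_le hcob ?_)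
  exact (eventually_lt_rpow_one_div_of_mul_pow_le hC hw.le (half_lt_self hw) hlow).mono
    fun _ => le_of_lt

theorem eventually_pow_lt_of_lt_liminf_rpow_one_div {r : ℝ} (ha : ∀ n, 0 ≤ a n) (hr : 0 ≤ r)
    (h : r < liminf (fun n => a n ^ (1 / (n : ℝ))) atTop) : ∀ᶠ n in atTop, r ^ n < a n := by
  have hbdd : IsBoundedUnder (· ≥ ·) atTop (fun n => a n ^ (1 / (n : ℝ))) :=
    isBoundedUnder_of ⟨0, fun n => Real.rpow_nonneg (ha n) _⟩
  filter_upwards [eventually_lt_of_lt_liminf h hbdd, eventually_ne_atTop 0] with n hn hn0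
  calc r ^ n < (a n ^ (1 / (n : ℝ))) ^ n := pow_lt_pow_left₀ hn hr hn0
    _ = a n := by rw [one_div, Real.rpow_inv_natCast_pow (ha n) hn0]

end RootTest

section Perturbation

variable {𝕜 : Type*} [NormedField 𝕜] {γ q : ℕ → 𝕜}

theorem tendsto_div_zero_of_summable_mul_pow {c : ℝ} (hc : 0 < c) (hγ : ∀ᶠ n in atTop, c⁻¹ ^ n < ‖γ n‖)
    (hq : Summable fun n => ‖q n‖ * c ^ n) : Tendsto (fun n => q n / γ n) atTop (𝓝 0) := by
  rw [tendsto_zero_iff_norm_tendsto_zero]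
  refine squeeze_zero' (Eventually.of_forall fun n => norm_nonneg _) ?_ hq.tendsto_atTop_zero
  filter_upwards [hγ] with n hn
  calc ‖q n / γ n‖ = ‖q n‖ / ‖γ n‖ := norm_div _ _
    _ ≤ ‖q n‖ / c⁻¹ ^ n := div_le_div_of_nonneg_left (norm_nonneg _) (by positivity) hn.le
    _ = ‖q n‖ * c ^ n := by rw [inv_pow, div_inv_eq_mul]

theorem exists_tendsto_one_ratio_add_eq_mul (hγ : ∀ᶠ n in atTop, γ n ≠ 0)
    (hε : Tendsto (fun n => q n / γ n) atTop (𝓝 0)) (k : ℕ) :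
    ∃ ρ : ℕ → 𝕜, Tendsto ρ atTop (𝓝 1) ∧
      ∀ᶠ n in atTop, (γ (n - k) + q (n - k)) / (γ n + q n) = γ (n - k) / γ n * ρ n := by
  have hε' : Tendsto (fun n => 1 + q n / γ n) atTop (𝓝 1) := by simpa using hε.const_add 1
  have hρ := (hε'.comp (tendsto_sub_atTop_nat k)).div hε' one_ne_zero
  rw [div_one] at hρ
  refine ⟨fun n => (1 + q (n - k) / γ (n - k)) / (1 + q n / γ n), hρ, ?_⟩
  filter_upwards [hγ, (tendsto_sub_atTop_nat k).eventually hγ] with n hn hnk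
  rw [← mul_div_mul_comm, mul_add, mul_add, mul_one, mul_one, mul_div_cancel₀ _ hn,
    mul_div_cancel₀ _ hnk]

end Perturbation

namespace Tame

variable {γ q : ℕ → ℂ} {u v : ℝ} {N : ℕ}

theorem ne_zero (h : Tame γ u v N) {n : ℕ} (hn : N ≤ n) : γ n ≠ 0 :=
  h.2.2.1 n hn

theorem eventually_ne_zero (h : Tame γ u v N) : ∀ᶠ n in atTop, γ n ≠ 0 :=
  eventually_atTop.2 ⟨N, fun _ => h.ne_zero⟩

theorem norm_div_le_pow (h : Tame γ u v N) {j n : ℕ} (hjn : N + j ≤ n) :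
    ‖γ (n - j) / γ n‖ ≤ v ^ j := by
  induction j with
  | zero => rw [Nat.sub_zero, div_self (h.ne_zero (by omega)), norm_one, pow_zero]
  | succ j ih =>
    rw [Nat.sub_add_eq, ← div_mul_div_cancel₀ (h.ne_zero (n := n - j) (by omega)), norm_mul, pow_succ']
    exact mul_le_mul (h.2.2.2 _ (by omega)).2 (ih (by omega)) (norm_nonneg _) h.2.1.le

theorem pow_le_norm_div (h : Tame γ u v N) {j n : ℕ} (hjn : N + j ≤ n) :
    u ^ j ≤ ‖γ (n - j) / γ n‖ := by
  induction j with
  | zero => rw [Nat.sub_zero, div_self (h.ne_zero (by omega)), norm_one, pow_zero]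
  | succ j ih =>
    rw [Nat.sub_add_eq, ← div_mul_div_cancel₀ (h.ne_zero (n := n - j) (by omega)), norm_mul, pow_succ']
    exact mul_le_mul (h.2.2.2 _ (by omega)).1 (ih (by omega)) (pow_nonneg h.1.le _) (norm_nonneg _)

theorem mul_inv_pow_le_norm (h : Tame γ u v N) {n : ℕ} (hn : N ≤ n) :
    ‖γ N‖ * v ^ N * v⁻¹ ^ n ≤ ‖γ n‖ := by
  have hratio := h.norm_div_le_pow (j := n - N) (n := n) (by omega)
  rw [Nat.sub_sub_self hn, norm_div,
    div_le_iff₀ (norm_pos_iff.2 (h.ne_zero hn))] at hratio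
  calc ‖γ N‖ * v ^ N * v⁻¹ ^ n ≤ v ^ (n - N) * ‖γ n‖ * v ^ N * v⁻¹ ^ n := by
        have hv := h.2.1; gcongr
    _ = ‖γ n‖ * ((v ^ (n - N) * v ^ N) * v⁻¹ ^ n) := by ring
    _ = ‖γ n‖ := by rw [pow_sub_mul_pow v hn, ← mul_pow, mul_inv_cancel₀ h.2.1.ne', one_pow, mul_one]

theorem norm_le_mul_inv_pow (h : Tame γ u v N) {n : ℕ} (hn : N ≤ n) :
    ‖γ n‖ ≤ ‖γ N‖ * u ^ N * u⁻¹ ^ n := by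
  have hratio := h.pow_le_norm_div (j := n - N) (n := n) (by omega)
  rw [Nat.sub_sub_self hn, norm_div,
    le_div_iff₀ (norm_pos_iff.2 (h.ne_zero hn))] at hratio
  calc ‖γ n‖ = ‖γ n‖ * ((u ^ (n - N) * u ^ N) * u⁻¹ ^ n) := by
        rw [pow_sub_mul_pow u hn, ← mul_pow, mul_inv_cancel₀ h.1.ne', one_pow, mul_one]
    _ = u ^ (n - N) * ‖γ n‖ * u ^ N * u⁻¹ ^ n := by ring
    _ ≤ ‖γ N‖ * u ^ N * u⁻¹ ^ n := by have hu := h.1; gcongr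

theorem liminf_norm_rpow_one_div_pos (h : Tame γ u v N) :
    0 < liminf (fun n => ‖γ n‖ ^ (1 / (n : ℝ))) atTop := by
  have hγN : 0 < ‖γ N‖ := norm_pos_iff.2 (h.ne_zero le_rfl)
  exact liminf_rpow_one_div_pos (fun n => norm_nonneg _) (mul_pos hγN (pow_pos h.2.1 N))
    (mul_pos hγN (pow_pos h.1 N))
    (inv_pos.2 h.2.1) (inv_nonneg.2 h.1.le)
    (eventually_atTop.2 ⟨N, fun n => h.mul_inv_pow_le_norm⟩)
    (eventually_atTop.2 ⟨N, fun n => h.norm_le_mul_inv_pow⟩)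

theorem add_of_tendsto_div (h : Tame γ u v N) (hε : Tendsto (fun n => q n / γ n) atTop (𝓝 0)) :
    ∃ N', Tame (fun n => γ n + q n) (u / 2) (2 * v) N' := by
  obtain ⟨ρ, hρ, hρeq⟩ := exists_tendsto_one_ratio_add_eq_mul h.eventually_ne_zero hε 1
  have hne : ∀ᶠ n in atTop, γ n + q n ≠ 0 := by
    filter_upwards [h.eventually_ne_zero, (hε.const_add 1).eventually_ne (by simp : (1 : ℂ) + 0 ≠ 0)]
      with n hn h1
    rwa [← mul_ne_zero_iff_left hn, mul_add, mul_one, mul_div_cancel₀ _ hn] at h1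
  have hρnorm : Tendsto (fun n => ‖ρ n‖) atTop (𝓝 1) := by simpa using hρ.norm
  obtain ⟨M, hM⟩ := eventually_atTop.1 <| hne.and <| hρeq.and <|
    (hρnorm.eventually (eventually_gt_nhds one_half_lt_one)).and <|
    (hρnorm.eventually (eventually_lt_nhds one_lt_two)).and (eventually_ge_atTop (N + 1))
  refine ⟨M, half_pos h.1, by linarith [h.2.1], fun n hn => (hM n hn).1, fun n hn => ?_⟩
  obtain ⟨-, heq, hlo, hhi, hN⟩ := hM n (by omega)
  obtain ⟨hu, hv⟩ := h.2.2.2 n hN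
  beta_reduce
  rw [heq, norm_mul]
  constructor
  · calc u / 2 = u * (1 / 2) := by ring
      _ ≤ _ := mul_le_mul hu hlo.le (by norm_num) (norm_nonneg _)
  · calc _ ≤ v * 2 := mul_le_mul hv hhi.le (norm_nonneg _) h.2.1.le
      _ = 2 * v := mul_comm _ _

theorem tendsto_oppPoly_add_sub (h : Tame γ u v N)
    (hε : Tendsto (fun n => q n / γ n) atTop (𝓝 0)) :
    Tendsto (fun n => oppPoly (fun m => γ m + q m) n - oppPoly γ n) atTop (𝓝 0) := by
  refine tendsto_pi_nhds.2 fun k => ?_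
  obtain ⟨ρ, hρ, hρeq⟩ := exists_tendsto_one_ratio_add_eq_mul h.eventually_ne_zero hε k
  have hbdd : IsBoundedUnder (· ≤ ·) atTop (fun n => ‖oppPoly γ n k‖) :=
    isBoundedUnder_of_eventually_le (eventually_atTop.2 ⟨N + k, fun n hn => by
      rw [oppPoly, if_pos (by omega)]; exact h.norm_div_le_pow hn⟩)
  have hρ' : Tendsto (fun n => ρ n - 1) atTop (𝓝 0) := by simpa using hρ.sub_const 1
  refine (hρ'.zero_mul_isBoundedUnder_le hbdd).congr' ?_
  filter_upwards [hρeq, eventually_ge_atTop k] with n hn hkn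
  simp only [Pi.sub_apply, oppPoly, if_pos hkn, hn]
  ring

end Tame

/-- Stability of `Ω(P)`: adding a power series `Q` whose radius of convergence
    exceeds `R_P = 1/liminf |γ_n|^{1/n}` does not change tameness nor `Ω(P)`. -/
theorem omega_stability (γ q : ℕ → ℂ) (u v : ℝ) (N : ℕ) (h : Tame γ u v N)
    (c : ℝ) (hc : 1 / Filter.liminf (fun n => ‖γ n‖ ^ (1 / (n : ℝ))) atTop < c)
    (hq : Summable (fun n => ‖q n‖ * c ^ n)) :
    (∃ u' v' : ℝ, ∃ N' : ℕ, Tame (fun n => γ n + q n) u' v' N') ∧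
      OmegaP (fun n => γ n + q n) = OmegaP γ := by
  have hL := h.liminf_norm_rpow_one_div_pos
  have hc0 : 0 < c := (one_div_pos.2 hL).trans hc
  have hγ : ∀ᶠ n in atTop, c⁻¹ ^ n < ‖γ n‖ :=
    eventually_pow_lt_of_lt_liminf_rpow_one_div (fun n => norm_nonneg _) (inv_nonneg.2 hc0.le)
      (by rw [inv_eq_one_div]; exact (one_div_lt hL hc0).1 hc)
  have hε := tendsto_div_zero_of_summable_mul_pow hc0 hγ hq
  refine ⟨⟨_, _, h.add_of_tendsto_div hε⟩, ?_⟩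
  ext a
  exact mapClusterPt_iff_of_tendsto_sub (h.tendsto_oppPoly_add_sub hε)
end

section
/- Let P = ∑ γ_n t^n be tame. The sequence (X_n(P)) of opposite polynomials is finite rationally accumulating of period h (i.e., Ω(P) is finite and for each residue class e mod h the subsequence over n ≡ e (mod h) converges, with h minimal) if and only if the sequence (γ_{n−1}/γ_n) is finite rationally accumulating of period h. -/
open Filter

/-- A sequence in a topological space is finite rationally accumulating of period `h`:
    its cluster set is finite, every congruence-class subsequence mod `h` converges,
    and `h` is minimal with this property. -/
def FinRatAccum {α : Type*} [TopologicalSpace α] (x : ℕ → α) (h : ℕ) : Prop :=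
  0 < h ∧ {a | MapClusterPt a atTop x}.Finite ∧
    (∀ e < h, ∃ L, Tendsto (fun m => x (e + h * m)) atTop (nhds L)) ∧
    ∀ h' : ℕ, 0 < h' → (∀ e < h', ∃ L, Tendsto (fun m => x (e + h' * m)) atTop (nhds L)) →
      h ≤ h'

/-!
The `k`-th coefficient of `X_n(P)` is the telescoping product
`∏_{i<k} γ_{n-i-1}/γ_{n-i}` of `k` consecutive ratios, and its first coefficient is the ratio
`γ_{n-1}/γ_n` itself. Hence, for every `h`, the opposite polynomials converge along all residue
classes mod `h` iff the ratios do. In a Hausdorff space this convergence already forces the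
cluster set to be finite (every cluster point is the limit of some residue class), so both
conditions reduce to "`h` is the least period along which the residue classes converge".
-/

open Set

def ResidueClassesConverge {α : Type*} [TopologicalSpace α] (x : ℕ → α) (h : ℕ) : Prop :=
  ∀ e < h, ∃ L, Tendsto (fun m => x (e + h * m)) atTop (nhds L)

section ResidueClasses

variable {α : Type*} [TopologicalSpace α] {x : ℕ → α} {h : ℕ}

namespace ResidueClassesConverge

theorem exists_tendsto_add_mul (hx : ResidueClassesConverge x h) (hh : 0 < h) (c : ℕ) :
    ∃ L, Tendsto (fun m => x (c + h * m)) atTop (nhds L) := by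
  obtain ⟨L, hL⟩ := hx (c % h) (Nat.mod_lt c hh)
  refine ⟨L, (hL.comp (tendsto_add_atTop_nat (c / h))).congr fun m => ?_⟩
  simp only [Function.comp_apply]
  congr 1
  calc c % h + h * (m + c / h) = (c % h + h * (c / h)) + h * m := by ring
    _ = c + h * m := by rw [Nat.mod_add_div]

theorem exists_tendsto_add_mul_sub (hx : ResidueClassesConverge x h) (hh : 0 < h) (e i : ℕ) :
    ∃ L, Tendsto (fun m => x (e + h * m - i)) atTop (nhds L) := by
  obtain ⟨L, hL⟩ := hx.exists_tendsto_add_mul hh (e + h * i - i)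
  refine ⟨L, (hL.comp (tendsto_sub_atTop_nat i)).congr' ?_⟩
  filter_upwards [eventually_ge_atTop i] with m hm
  obtain ⟨d, rfl⟩ := Nat.exists_eq_add_of_le hm
  have hi : i ≤ h * i := Nat.le_mul_of_pos_left i hh
  simp only [Function.comp_apply, Nat.add_sub_cancel_left, Nat.mul_add]
  congr 1
  omega

end ResidueClassesConverge

theorem exists_mapClusterPt_add_mul (hh : 0 < h) {a : α} (ha : MapClusterPt a atTop x) :
    ∃ e < h, MapClusterPt a atTop (fun m => x (e + h * m)) := by
  by_contra! hnot
  simp only [mapClusterPt_iff_frequently, not_forall, not_frequently, exists_prop] at hnot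
  choose s hs hxs using hnot
  set U := ⋂ e : Fin h, s e e.2
  have hU : U ∈ nhds a := iInter_mem.2 fun e => hs e e.2
  have hev : ∀ᶠ m in atTop, ∀ e : Fin h, x (e + h * m) ∉ U :=
    eventually_all.2 fun e => (hxs e e.2).mono fun m hm hmU => hm (mem_iInter.1 hmU e)
  -- every `n` is `n % h + h * (n / h)`, and `n / h → ∞`
  obtain ⟨n, hn, hnU⟩ :=
    ((mapClusterPt_iff_frequently.1 ha U hU).and_eventually
      ((Nat.tendsto_div_const_atTop hh.ne').eventually hev)).exists
  exact hnU ⟨n % h, Nat.mod_lt n hh⟩ (by rwa [Nat.mod_add_div])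

theorem ResidueClassesConverge.finite_clusterSet [T2Space α] (hx : ResidueClassesConverge x h)
    (hh : 0 < h) : {a | MapClusterPt a atTop x}.Finite := by
  choose L hL using fun e : Fin h => hx e e.2
  refine (finite_range L).subset fun a ha => ?_
  obtain ⟨e, he, hae⟩ := exists_mapClusterPt_add_mul hh ha
  exact ⟨⟨e, he⟩, (eq_of_nhds_neBot (hae.clusterPt.neBot.mono
    (inf_le_inf_left _ (hL ⟨e, he⟩)))).symm⟩

theorem finRatAccum_iff_isLeast [T2Space α] :
    FinRatAccum x h ↔ IsLeast {h' | 0 < h' ∧ ResidueClassesConverge x h'} h := by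
  constructor
  · rintro ⟨hh, -, hx, hmin⟩
    exact ⟨⟨hh, hx⟩, fun h' ⟨hh', hx'⟩ => hmin h' hh' hx'⟩
  · rintro ⟨⟨hh, hx⟩, hmin⟩
    exact ⟨hh, hx.finite_clusterSet hh, hx, fun h' hh' hx' => hmin ⟨hh', hx'⟩⟩

end ResidueClasses

section OppPoly

variable {γ : ℕ → ℂ} {N : ℕ}

theorem oppPoly_apply_one {n : ℕ} (hn : 1 ≤ n) : oppPoly γ n 1 = γ (n - 1) / γ n := by
  simp only [oppPoly, if_pos hn]

theorem oppPoly_apply_eq_prod (hγ : ∀ n ≥ N, γ n ≠ 0) {k n : ℕ} (hkn : N + k ≤ n) :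
    oppPoly γ n k = ∏ i ∈ Finset.range k, γ (n - i - 1) / γ (n - i) := by
  induction k with
  | zero =>
    simp only [oppPoly, Finset.range_zero, Finset.prod_empty, Nat.sub_zero, if_pos (Nat.zero_le n)]
    exact div_self (hγ n (by omega))
  | succ k ih =>
    rw [Finset.prod_range_succ, ← ih (by omega)]
    have hnk : γ (n - k) ≠ 0 := hγ _ (by omega)
    have hn : γ n ≠ 0 := hγ n (by omega)
    simp only [oppPoly, if_pos (show k + 1 ≤ n by omega), if_pos (show k ≤ n by omega),
      show n - (k + 1) = n - k - 1 by omega]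
    field_simp

theorem residueClassesConverge_oppPoly_iff (hγ : ∀ n ≥ N, γ n ≠ 0) {h : ℕ} (hh : 0 < h) :
    ResidueClassesConverge (oppPoly γ) h ↔
      ResidueClassesConverge (fun n => γ (n - 1) / γ n) h := by
  have hge (e k : ℕ) : ∀ᶠ m in atTop, k ≤ e + h * m := by
    filter_upwards [eventually_ge_atTop k] with m hm
    exact le_add_left (hm.trans (Nat.le_mul_of_pos_left m hh))
  constructor
  · intro hX e he
    obtain ⟨F, hF⟩ := hX e he
    refine ⟨F 1, (tendsto_pi_nhds.1 hF 1).congr' ?_⟩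
    filter_upwards [hge e 1] with m hm
    exact oppPoly_apply_one hm
  · intro hr e he
    choose R hR using hr.exists_tendsto_add_mul_sub hh e
    refine ⟨fun k => ∏ i ∈ Finset.range k, R i, tendsto_pi_nhds.2 fun k => ?_⟩
    refine (tendsto_finsetProd _ fun i _ => hR i).congr' ?_
    filter_upwards [hge e (N + k)] with m hm
    exact (oppPoly_apply_eq_prod hγ hm).symm

end OppPoly

/-- The opposite polynomials of a tame series are finite rationally accumulating of
    period `h` iff the ratio sequence `γ_{n-1}/γ_n` is. -/
theorem finRatAccum_iff (γ : ℕ → ℂ) (u v : ℝ) (N : ℕ) (htame : Tame γ u v N) (h : ℕ) :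
    FinRatAccum (oppPoly γ) h ↔ FinRatAccum (fun n => γ (n - 1) / γ n) h := by
  obtain ⟨-, -, hγ, -⟩ := htame
  have hperiods : {h' | 0 < h' ∧ ResidueClassesConverge (oppPoly γ) h'} =
      {h' | 0 < h' ∧ ResidueClassesConverge (fun n => γ (n - 1) / γ n) h'} :=
    ext fun _ => and_congr_right (residueClassesConverge_oppPoly_iff hγ)
  rw [finRatAccum_iff_isLeast, finRatAccum_iff_isLeast, hperiods]
end

section
/- Suppose P is tame and for each residue e mod h the limit a_1^{[e]} := lim_{n→∞, n≡e (h)} γ_{n−1}/γ_n exists (finite rational accumulation of period h). Then for every k ≥ 0, lim_{n→∞, n≡e (h)} γ_{n−k}/γ_n = a_1^{[e]} a_1^{[e−1]} ⋯ a_1^{[e−k+1]}. Consequently each limiting opposite series a^{[e]}(s) = ∑_k a_k^{[e]} s^k satisfies the semi-periodicity a_{mh+k}^{[e]} = A^m a_k^{[e]} where A := ∏_{i=0}^{h−1} a_1^{[i]}, and hence equals the rational function a^{[e]}(s) = A^{[e]}(s)/(1 − A s^h), where A^{[e]}(s) := ∑_{j=0}^{h−1} (∏_{i=1}^{j} a_1^{[e−i+1]})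 s^j. -/
open Filter

/-! Telescoping writes `γ (n - k) / γ n` as the product of the ratios `γ (n - i - 1) / γ (n - i)`,
`i < k`; along `n ≡ e (mod h)` the `i`-th ratio runs through the residue class `e - i`, hence
tends to `a1 (e - i)`. The coefficients `i ↦ a1 (e - i)` are `h`-periodic, so the products over
ranges satisfy `c (j + h) = A * c j`, and multiplying a power series with that recursion by
`1 - A sʰ` leaves only its coefficients of degree `< h`. -/

open Finset

theorem Function.Periodic.prod_range_mul_add {M : Type*} [CommMonoid M] {g : ℕ → M} {h : ℕ}
    (hg : Function.Periodic g h) (m k : ℕ) :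
    ∏ i ∈ range (m * h + k), g i = (∏ i ∈ range h, g i) ^ m * ∏ i ∈ range k, g i := by
  induction m with
  | zero => simp
  | succ m ih =>
    have hshift : ∀ i, g (h + i) = g i := fun i => by rw [add_comm, hg i]
    rw [show (m + 1) * h + k = h + (m * h + k) by ring, prod_range_add]
    simp only [hshift, ih]
    rw [pow_succ', mul_assoc]

namespace ZMod

theorem periodic_comp_sub_natCast {α : Type*} {h : ℕ} (f : ZMod h → α) (e : ZMod h) :
    Function.Periodic (fun i : ℕ => f (e - i)) h := fun i => by
  simp only [Nat.cast_add, natCast_self, add_zero]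

variable {M : Type*} [CommMonoid M] {h : ℕ}

theorem prod_range_natCast [NeZero h] (f : ZMod h → M) :
    ∏ i ∈ range h, f i = ∏ x, f x :=
  prod_nbij' (fun i => i) val (fun _ _ => mem_univ _) (fun x _ => mem_range.2 x.val_lt)
    (fun _ hi => val_cast_of_lt (mem_range.1 hi)) (fun x _ => natCast_zmod_val x) fun _ _ => rfl

theorem prod_range_sub_natCast [NeZero h] (f : ZMod h → M) (e : ZMod h) :
    ∏ i ∈ range h, f (e - i) = ∏ x, f x := by
  rw [prod_range_natCast fun x => f (e - x)]
  exact Fintype.prod_equiv (Equiv.subLeft e) _ _ fun _ => rfl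

theorem tendsto_comp_val_add_mul_sub {X : Type*} [TopologicalSpace X] [NeZero h] {F : ℕ → X}
    {e : ZMod h} {i : ℕ} {L : X}
    (hF : Tendsto (fun m => F ((e - i).val + h * m)) atTop (nhds L)) :
    Tendsto (fun m => F (e.val + h * m - i)) atTop (nhds L) := by
  -- `n - i` lies in the residue class `e - i`, and `n = n % h + h * (n / h)`.
  have hres : ∀ m ≥ i, e.val + h * m - i = (e - i).val + h * ((e.val + h * m - i) / h) := by
    intro m hm
    have hcast : ((e.val + h * m - i : ℕ) : ZMod h) = e - i := by
      rw [Nat.cast_sub (by nlinarith [NeZero.pos h])]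
      simp
    rw [← hcast, val_natCast, Nat.mod_add_div]
  have hquot : Tendsto (fun m => (e.val + h * m - i) / h) atTop atTop := by
    refine tendsto_atTop_atTop.2 fun b => ⟨b + i, fun m hm => ?_⟩
    rw [Nat.le_div_iff_mul_le (NeZero.pos h)]
    apply Nat.le_sub_of_add_le
    nlinarith [NeZero.pos h]
  refine (hF.comp hquot).congr' ?_
  filter_upwards [eventually_ge_atTop i] with m hm
  exact congrArg F (hres m hm).symm

end ZMod

theorem div_eq_prod_range_ratio {K : Type*} [Field K] {γ : ℕ → K} {n k : ℕ}
    (hγ : ∀ i ≤ k, γ (n - i) ≠ 0) :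
    γ (n - k) / γ n = ∏ i ∈ range k, γ (n - i - 1) / γ (n - i) := by
  induction k with
  | zero => simpa using div_self (hγ 0 le_rfl)
  | succ k ih =>
    rw [prod_range_succ, ← ih fun i hi => hγ i (by omega), Nat.sub_succ',
      div_mul_div_cancel₀' (hγ k (by omega))]

theorem tendsto_div_prod_of_tendsto_ratio {K : Type*} [Field K] [TopologicalSpace K] [ContinuousMul K]
    {γ : ℕ → K} {N h : ℕ} [NeZero h] (hγ : ∀ n ≥ N, γ n ≠ 0) {a1 : ZMod h → K}
    (hlim : ∀ e : ZMod h,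
      Tendsto (fun m => γ (e.val + h * m - 1) / γ (e.val + h * m)) atTop
        (nhds (a1 e)))
    (e : ZMod h) (k : ℕ) :
    Tendsto (fun m => γ (e.val + h * m - k) / γ (e.val + h * m)) atTop
      (nhds (∏ i ∈ range k, a1 (e - i))) := by
  have hfactor : ∀ i ∈ range k, Tendsto
      (fun m => γ (e.val + h * m - i - 1) / γ (e.val + h * m - i)) atTop
      (nhds (a1 (e - i))) := fun i _ =>
    ZMod.tendsto_comp_val_add_mul_sub (F := fun n => γ (n - 1) / γ n) (hlim (e - i))
  refine (tendsto_finsetProd _ hfactor).congr' ?_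
  filter_upwards [eventually_ge_atTop (N + k)] with m hm
  have hmul : m ≤ h * m := Nat.le_mul_of_pos_left m (NeZero.pos h)
  exact (div_eq_prod_range_ratio fun i hi => hγ _ (by omega)).symm

theorem PowerSeries.one_sub_C_mul_X_pow_mul_mk {R : Type*} [CommRing R] {c : ℕ → R} {A : R}
    {h : ℕ} (hc : ∀ j, c (j + h) = A * c j) :
    (1 - C A * X ^ h) * mk c = mk fun j => if j < h then c j else 0 := by
  ext j
  rw [sub_mul, one_mul, map_sub, mul_right_comm, coeff_mul_X_pow', coeff_mk, coeff_mk]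
  rcases lt_or_ge j h with hj | hj
  · rw [if_neg (by omega), if_pos hj, sub_zero]
  · rw [if_pos hj, if_neg (by omega), coeff_C_mul, coeff_mk, sub_eq_zero, ← hc,
      Nat.sub_add_cancel hj]

open Finset in
/-- Under finite rational accumulation of period `h`, the higher ratio limits are
    products of the period-one limits, the limiting opposite series is
    semi-periodic, and it equals the rational function `A^{[e]}(s)/(1 - A sʰ)`. -/
theorem opposite_series_rational (γ : ℕ → ℂ) (u v : ℝ) (N : ℕ) (htame : Tame γ u v N)
    (h : ℕ) (hpos : 0 < h) (a1 : ZMod h → ℂ)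
    (hlim : ∀ e : ZMod h,
      Tendsto (fun m => γ (e.val + h * m - 1) / γ (e.val + h * m)) atTop (nhds (a1 e))) :
    -- limits of higher ratios
    (∀ e : ZMod h, ∀ k : ℕ,
      Tendsto (fun m => γ (e.val + h * m - k) / γ (e.val + h * m)) atTop
        (nhds (∏ i ∈ range k, a1 (e - (i : ℕ))))) ∧
    -- semi-periodicity of the coefficients
    (∀ e : ZMod h, ∀ m k : ℕ, k < h →
      (∏ i ∈ range (m * h + k), a1 (e - (i : ℕ)))
        = (∏ i ∈ range h, a1 (i : ℕ)) ^ m * ∏ i ∈ range k, a1 (e - (i : ℕ))) ∧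
    -- the opposite series is the rational function A^{[e]}(s)/(1 - A s^h)
    (∀ e : ZMod h,
      (1 - PowerSeries.C (∏ i ∈ range h, a1 (i : ℕ)) * PowerSeries.X ^ h) *
          PowerSeries.mk (fun k => ∏ i ∈ range k, a1 (e - (i : ℕ)))
        = PowerSeries.mk (fun j => if j < h then ∏ i ∈ range j, a1 (e - (i : ℕ)) else 0)) := by
  have : NeZero h := ⟨hpos.ne'⟩
  obtain ⟨-, -, hγ, -⟩ := htame
  have hsemi : ∀ (e : ZMod h) (m k : ℕ), ∏ i ∈ range (m * h + k), a1 (e - (i : ℕ))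
      = (∏ i ∈ range h, a1 (i : ℕ)) ^ m * ∏ i ∈ range k, a1 (e - (i : ℕ)) := by
    intro e m k
    rw [(ZMod.periodic_comp_sub_natCast a1 e).prod_range_mul_add, ZMod.prod_range_sub_natCast,
      ZMod.prod_range_natCast]
  refine ⟨tendsto_div_prod_of_tendsto_ratio hγ hlim, fun e m k _ => hsemi e m k, fun e => ?_⟩
  refine PowerSeries.one_sub_C_mul_X_pow_mul_mk fun j => ?_
  simpa [add_comm] using hsemi e 1 j
end

section
/- Under finite rational accumulation of period h with limits a_1^{[e]} as above and A := ∏_{i=0}^{h−1} a_1^{[i]}, the radius of convergence r_P of P and R_P := 1/liminf|γ_n|^{1/n} satisfy r_P^h = R_P^h = |A|. In particular liminf and limsup of |γ_n|^{1/n} coincide. -/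
open Filter

/-!
Write `γ (k - 1) / γ k = a₁^{[k mod h]} · (1 + o(1))`. Telescoping over a window of length `h`
meets every residue class once, so `γ n / γ (n + h) → A`. Taking logarithms, the sequence
`log ‖γ n‖` then has asymptotic slope `-log ‖A‖ / h` along each residue class (Cesàro), hence
along all `n`, i.e. `‖γ n‖ ^ (1 / n) → ‖A‖ ^ (-1 / h)`: limsup and liminf both equal this limit.
-/

open Finset Topology

theorem tendsto_of_tendsto_on_residues {α : Type*} {l : Filter α} {f : ℕ → α} {h : ℕ}
    (hh : 0 < h) (hf : ∀ r < h, Tendsto (fun m => f (r + h * m)) atTop l) :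
    Tendsto f atTop l := by
  intro s hs
  obtain ⟨M, hM⟩ := eventually_atTop.1 <|
    (eventually_all_finset (range h)).2 fun r hr => hf r (mem_range.1 hr) hs
  refine mem_map.2 (mem_atTop_sets.2 ⟨h * M, fun n hn => ?_⟩)
  have hq : M ≤ n / h := (Nat.le_div_iff_mul_le hh).2 (by rwa [mul_comm])
  show f n ∈ s
  simpa only [Nat.mod_add_div] using hM (n / h) hq (n % h) (mem_range.2 (Nat.mod_lt n hh))

theorem prod_range_natCast_add {M : Type*} [CommMonoid M] {h : ℕ} [NeZero h] (f : ZMod h → M)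
    (n : ℕ) : ∏ j ∈ range h, f ((n + j : ℕ) : ZMod h) = ∏ i, f i := by
  have hrange : ∏ j ∈ range h, f ((n : ZMod h) + j) = ∏ i, f (n + i) :=
    prod_nbij' (fun j => (j : ZMod h)) ZMod.val (fun _ _ => mem_univ _)
      (fun i _ => mem_range.2 i.val_lt) (fun j hj => ZMod.val_cast_of_lt (mem_range.1 hj))
      (fun i _ => ZMod.natCast_zmod_val i) (fun _ _ => rfl)
  push_cast
  rw [hrange]
  exact Fintype.prod_equiv (Equiv.addLeft (n : ZMod h)) _ _ fun _ => rfl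

theorem prod_range_div_succ {G : Type*} [CommGroupWithZero G] {f : ℕ → G} (hf : ∀ j, f j ≠ 0)
    (n : ℕ) : ∏ j ∈ range n, f j / f (j + 1) = f 0 / f n := by
  induction n with
  | zero => simp [div_self (hf 0)]
  | succ n ih => rw [prod_range_succ, ih, div_mul_div_cancel₀ (hf n)]

theorem tendsto_div_natCast_of_tendsto_sub_succ {g : ℕ → ℝ} {c : ℝ}
    (hg : Tendsto (fun n => g (n + 1) - g n) atTop (𝓝 c)) :
    Tendsto (fun n => g n / n) atTop (𝓝 c) := by
  have hmean : Tendsto (fun n : ℕ => (n : ℝ)⁻¹ * (g n - g 0)) atTop (𝓝 c) := by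
    simpa only [sum_range_sub] using hg.cesaro
  have hinit : Tendsto (fun n : ℕ => g 0 / n) atTop (𝓝 0) :=
    tendsto_const_div_atTop_nhds_zero_nat _
  simpa using (hmean.add hinit).congr fun n => by ring

theorem tendsto_div_natCast_of_tendsto_sub {g : ℕ → ℝ} {h : ℕ} {c : ℝ} (hh : 0 < h)
    (hg : Tendsto (fun n => g (n + h) - g n) atTop (𝓝 c)) :
    Tendsto (fun n => g n / n) atTop (𝓝 (c / h)) := by
  refine tendsto_of_tendsto_on_residues hh fun r _ => ?_
  have hclass : Tendsto (fun m : ℕ => g (r + h * m) / m) atTop (𝓝 c) := by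
    have hidx : Tendsto (fun m => r + h * m) atTop atTop :=
      tendsto_atTop_mono (fun m => le_add_left (Nat.le_mul_of_pos_left m hh)) tendsto_id
    refine tendsto_div_natCast_of_tendsto_sub_succ ((hg.comp hidx).congr fun m => ?_)
    simp only [Function.comp, mul_add, mul_one, add_assoc]
  have hscale : Tendsto (fun m : ℕ => (m : ℝ) / ((r + h * m : ℕ) : ℝ)) atTop (𝓝 (1 / h)) := by
    refine ((tendsto_natCast_div_add_atTop ((r : ℝ) / h)).div_const (h : ℝ)).congr fun m => ?_
    have : (h : ℝ) ≠ 0 := by positivity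
    push_cast
    field_simp
    ring
  refine ((hclass.mul hscale).congr' ?_).trans (by rw [mul_one_div])
  filter_upwards [eventually_ne_atTop 0] with m hm
  exact div_mul_div_cancel₀ (Nat.cast_ne_zero.2 hm)

theorem tendsto_rpow_one_div_of_tendsto_div_add {x : ℕ → ℝ} {h : ℕ} {L : ℝ} (hh : 0 < h)
    (hx : ∀ᶠ n in atTop, 0 < x n) (hL : 0 < L)
    (hratio : Tendsto (fun n => x n / x (n + h)) atTop (𝓝 L)) :
    Tendsto (fun n => x n ^ (1 / (n : ℝ))) atTop (𝓝 (L ^ (-(1 : ℝ) / h))) := by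
  have hlog : Tendsto (fun n => Real.log (x (n + h)) - Real.log (x n)) atTop
      (𝓝 (-Real.log L)) := by
    refine (hratio.log hL.ne').neg.congr' ?_
    filter_upwards [hx, (tendsto_add_atTop_nat h).eventually hx] with n hn hnh
    rw [Real.log_div hn.ne' hnh.ne', neg_sub]
  have hslope := (tendsto_div_natCast_of_tendsto_sub (g := fun n => Real.log (x n)) hh hlog).rexp
  rw [Real.rpow_def_of_pos hL, mul_div, mul_neg_one]
  refine hslope.congr' ?_
  filter_upwards [hx] with n hn
  rw [Real.rpow_def_of_pos hn, mul_one_div]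

theorem tendsto_div_add_of_tendsto_ratio_on_residues {K : Type*} [NormedField K] {γ : ℕ → K} {h : ℕ}
    [NeZero h] {a : ZMod h → K} (ha : ∀ e, a e ≠ 0) (hγ : ∀ᶠ n in atTop, γ n ≠ 0)
    (hlim : ∀ e : ZMod h,
      Tendsto (fun m => γ (e.val + h * m - 1) / γ (e.val + h * m)) atTop (𝓝 (a e))) :
    Tendsto (fun n => γ n / γ (n + h)) atTop (𝓝 (∏ e, a e)) := by
  have hnormalized : Tendsto (fun k => γ (k - 1) / γ k / a k) atTop (𝓝 1) := by
    refine tendsto_of_tendsto_on_residues (NeZero.pos h) fun r hr => ?_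
    have := (hlim r).div_const (a r)
    rw [div_self (ha r), ZMod.val_cast_of_lt hr] at this
    simpa using this
  have hwindow : Tendsto (fun n => ∏ j ∈ range h, γ (n + j) / γ (n + j + 1) / a (n + 1 + j : ℕ))
      atTop (𝓝 1) := by
    have := tendsto_finsetProd (range h) fun j _ => hnormalized.comp (tendsto_add_atTop_nat (j + 1))
    rw [prod_const_one] at this
    refine this.congr fun n => prod_congr rfl fun j _ => ?_
    rw [Function.comp_apply, Nat.add_succ_sub_one, ← add_assoc, add_right_comm n 1 j]
  rw [← one_mul (∏ e, a e)]
  refine (hwindow.mul_const _).congr' ?_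
  filter_upwards [eventually_forall_ge_atTop.2 hγ] with n hn
  rw [← prod_range_natCast_add a (n + 1), ← prod_mul_distrib]
  calc ∏ j ∈ range h, γ (n + j) / γ (n + j + 1) / a (n + 1 + j : ℕ) * a (n + 1 + j : ℕ)
      = ∏ j ∈ range h, γ (n + j) / γ (n + j + 1) :=
        prod_congr rfl fun j _ => div_mul_cancel₀ _ (ha _)
    _ = γ n / γ (n + h) :=
        prod_range_div_succ (f := fun j => γ (n + j)) (fun j => hn _ (Nat.le_add_right n j)) h

open Finset in
/-- Under finite rational accumulation of period `h` with `A = ∏ a₁^{[i]}`, one has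
    `r_P^h = R_P^h = |A|`: both `limsup` and `liminf` of `|γ_n|^{1/n}` equal
    `|A|^{-1/h}` (in particular they coincide). -/
theorem radius_eq_of_finRatAccum (γ : ℕ → ℂ) (u v : ℝ) (N : ℕ) (htame : Tame γ u v N)
    (h : ℕ) (hpos : 0 < h) (a1 : ZMod h → ℂ) (ha1 : ∀ e, a1 e ≠ 0)
    (hlim : ∀ e : ZMod h,
      Tendsto (fun m => γ (e.val + h * m - 1) / γ (e.val + h * m)) atTop (nhds (a1 e))) :
    limsup (fun n => ‖γ n‖ ^ (1 / (n : ℝ))) atTop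
        = ‖∏ i ∈ range h, a1 (i : ℕ)‖ ^ (-(1 : ℝ) / h) ∧
    liminf (fun n => ‖γ n‖ ^ (1 / (n : ℝ))) atTop
        = ‖∏ i ∈ range h, a1 (i : ℕ)‖ ^ (-(1 : ℝ) / h) := by
  have : NeZero h := ⟨hpos.ne'⟩
  have hγ : ∀ᶠ n in atTop, γ n ≠ 0 := eventually_atTop.2 ⟨N, htame.2.2.1⟩
  have hA : ∏ i ∈ range h, a1 (i : ℕ) = ∏ e, a1 e := by
    simpa using prod_range_natCast_add a1 0
  have hratio : Tendsto (fun n => ‖γ n‖ / ‖γ (n + h)‖) atTop (𝓝 ‖∏ i ∈ range h, a1 (i : ℕ)‖) := by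
    simpa only [hA, norm_div] using (tendsto_div_add_of_tendsto_ratio_on_residues ha1 hγ hlim).norm
  have hroot := tendsto_rpow_one_div_of_tendsto_div_add hpos
    (hγ.mono fun _ => norm_pos_iff.2) (norm_pos_iff.2 (prod_ne_zero_iff.2 fun _ _ => ha1 _))
    hratio
  exact ⟨hroot.limsup_eq, hroot.liminf_eq⟩
end

section
/- Fix h ≥ 1 and nonzero field elements a_1^{[0]}, …, a_1^{[h−1]} ∈ K^×, with indices mod h, and set A := ∏_{i=0}^{h−1} a_1^{[i]} and A^{[e]}(s) := ∑_{j=0}^{h−1} (∏_{i=1}^{j} a_1^{[e−i+1]}) s^j for e ∈ ℤ/hℤ. Then the identity a_1^{[e+1]} s · A^{[e]}(s) + (1 − A s^h) = A^{[e+1]}(s) holds in K[s], and all the gcd's gcd(A^{[e]}(s), 1 − A s^h) for e ∈ ℤ/hℤ are equal (up to normalization of constant term to 1); moreover gcd(A^{[e]}, 1 − A s^h) = gcd(A^{[e]}, A^{[e+1]}) for each e. -/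
open Finset Polynomial

/-- The numerator polynomial `A^{[e]}(s) = ∑_{j<h} (∏_{i<j} a₁^{[e-i]}) sʲ`. -/
noncomputable def Apoly {K : Type*} [Field K] (h : ℕ) (a1 : ZMod h → K) (e : ZMod h) :
    Polynomial K :=
  ∑ j ∈ Finset.range h, Polynomial.C (∏ i ∈ Finset.range j, a1 (e - (i : ℕ))) * Polynomial.X ^ j

/-- The constant `A = ∏_{i<h} a₁^{[i]}`. -/
noncomputable def Aconst {K : Type*} [Field K] (h : ℕ) (a1 : ZMod h → K) : K :=
  ∏ i ∈ Finset.range h, a1 (i : ℕ)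

/-- The polynomial `1 - A sʰ`. -/
noncomputable def cycPoly {K : Type*} [Field K] (h : ℕ) (a1 : ZMod h → K) : Polynomial K :=
  1 - Polynomial.C (Aconst h a1) * Polynomial.X ^ h

lemma prod_range_zmod {K : Type*} [CommMonoid K] {h : ℕ} [NeZero h] (f : ZMod h → K) :
    ∏ i ∈ Finset.range h, f (i : ℕ) = ∏ x : ZMod h, f x := by
  refine Finset.prod_nbij' (fun i => (i : ZMod h)) (fun x => x.val) ?_ ?_ ?_ ?_ ?_
  · intro a ha; exact Finset.mem_univ _
  · intro x hx; exact Finset.mem_range.mpr (ZMod.val_lt x)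
  · intro a ha; exact ZMod.val_cast_of_lt (Finset.mem_range.mp ha)
  · intro x hx; simp [ZMod.natCast_val, ZMod.cast_id]
  · intro a ha; rfl

lemma Apoly_key {K : Type*} [Field K] (h : ℕ) (hpos : 0 < h)
    (a1 : ZMod h → K) (e : ZMod h) :
    Polynomial.C (a1 (e + 1)) * Polynomial.X * Apoly h a1 e + cycPoly h a1
      = Apoly h a1 (e + 1) := by
  haveI : NeZero h := ⟨hpos.ne'⟩
  have hA : (∏ i ∈ Finset.range h, a1 (e + 1 - (i : ℕ))) = Aconst h a1 := by
    have h1 := prod_range_zmod (h := h) (fun x => a1 (e + 1 - x))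
    have h2 := prod_range_zmod (h := h) a1
    rw [Aconst]
    exact h1.trans ((Equiv.prod_comp (Equiv.subLeft (e + 1)) a1).trans h2.symm)
  have hmain : ∀ j : ℕ, (∏ i ∈ Finset.range (j + 1), a1 (e + 1 - (i : ℕ)))
      = a1 (e + 1) * ∏ i ∈ Finset.range j, a1 (e - (i : ℕ)) := by
    intro j
    rw [Finset.prod_range_succ']
    rw [mul_comm]
    congr 1
    · push_cast; ring_nf
    · refine Finset.prod_congr rfl fun i _ => ?_
      congr 1
      push_cast; ring
  have hsum : (∑ j ∈ Finset.range h, C (∏ i ∈ Finset.range j, a1 (e + 1 - (i : ℕ))) * X ^ j)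
        + C (Aconst h a1) * X ^ h
      = (∑ j ∈ Finset.range h,
          C (a1 (e + 1) * ∏ i ∈ Finset.range j, a1 (e - (i : ℕ))) * X ^ (j + 1)) + 1 := by
    rw [← hA, ← Finset.sum_range_succ
      (fun j => C (∏ i ∈ Finset.range j, a1 (e + 1 - (i : ℕ))) * X ^ j) h,
      Finset.sum_range_succ']
    congr 1
    · exact Finset.sum_congr rfl fun j _ => by rw [hmain j]
    · simp
  have hmul : C (a1 (e + 1)) * X * Apoly h a1 e
      = ∑ j ∈ Finset.range h,
          C (a1 (e + 1) * ∏ i ∈ Finset.range j, a1 (e - (i : ℕ))) * X ^ (j + 1) := by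
    rw [Apoly, Finset.mul_sum]
    refine Finset.sum_congr rfl fun j _ => ?_
    rw [C_mul]
    ring
  rw [hmul, cycPoly, Apoly]
  linear_combination -hsum

open Classical in
/-- The key identity `a₁^{[e+1]} s · A^{[e]}(s) + (1 − A sʰ) = A^{[e+1]}(s)`, and the
    equality (up to constant normalization, i.e. up to associates) of all the gcds
    `gcd(A^{[e]}, 1 − A sʰ)`, as well as `gcd(A^{[e]}, 1 − A sʰ) = gcd(A^{[e]}, A^{[e+1]})`. -/
theorem Apoly_gcd_identities {K : Type*} [Field K] (h : ℕ) (hpos : 0 < h)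
    (a1 : ZMod h → K) (ha1 : ∀ e, a1 e ≠ 0) :
    (∀ e : ZMod h,
      Polynomial.C (a1 (e + 1)) * Polynomial.X * Apoly h a1 e + cycPoly h a1
        = Apoly h a1 (e + 1)) ∧
    (∀ e e' : ZMod h,
      Associated (EuclideanDomain.gcd (Apoly h a1 e) (cycPoly h a1))
        (EuclideanDomain.gcd (Apoly h a1 e') (cycPoly h a1))) ∧
    (∀ e : ZMod h,
      Associated (EuclideanDomain.gcd (Apoly h a1 e) (cycPoly h a1))
        (EuclideanDomain.gcd (Apoly h a1 e) (Apoly h a1 (e + 1)))) := by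
  haveI : NeZero h := ⟨hpos.ne'⟩
  have key := Apoly_key h hpos a1
  have hXndvd : ¬ (X : Polynomial K) ∣ cycPoly h a1 := by
    rw [X_dvd_iff]
    simp [cycPoly, coeff_X_pow, hpos.ne]
  have step : ∀ e : ZMod h,
      Associated (EuclideanDomain.gcd (Apoly h a1 e) (cycPoly h a1))
        (EuclideanDomain.gcd (Apoly h a1 (e + 1)) (cycPoly h a1)) := by
    intro e
    apply associated_of_dvd_dvd
    · apply EuclideanDomain.dvd_gcd
      · rw [← key e]
        exact dvd_add ((EuclideanDomain.gcd_dvd_left _ _).mul_left _)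
          (EuclideanDomain.gcd_dvd_right _ _)
      · exact EuclideanDomain.gcd_dvd_right _ _
    · set d := EuclideanDomain.gcd (Apoly h a1 (e + 1)) (cycPoly h a1) with hd
      have hdcyc : d ∣ cycPoly h a1 := EuclideanDomain.gcd_dvd_right _ _
      have hdmul : d ∣ C (a1 (e + 1)) * X * Apoly h a1 e := by
        have : C (a1 (e + 1)) * X * Apoly h a1 e
            = Apoly h a1 (e + 1) - cycPoly h a1 := by
          rw [← key e]; ring
        rw [this]
        exact dvd_sub (EuclideanDomain.gcd_dvd_left _ _) hdcyc
      have hdXA : d ∣ X * Apoly h a1 e := by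
        have h2 : d ∣ C (a1 (e + 1))⁻¹ * (C (a1 (e + 1)) * X * Apoly h a1 e) :=
          hdmul.mul_left _
        have h3 : C (a1 (e + 1))⁻¹ * (C (a1 (e + 1)) * X * Apoly h a1 e)
            = X * Apoly h a1 e := by
          rw [← mul_assoc, ← mul_assoc, ← C_mul, inv_mul_cancel₀ (ha1 _), C_1, one_mul]
        rwa [h3] at h2
      have hXd : ¬ (X : Polynomial K) ∣ d := fun hdvd => hXndvd (hdvd.trans hdcyc)
      have hcop : IsCoprime (X : Polynomial K) d :=
        (Polynomial.irreducible_X.coprime_iff_not_dvd).mpr hXd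
      have hdA : d ∣ Apoly h a1 e := hcop.symm.dvd_of_dvd_mul_left hdXA
      exact EuclideanDomain.dvd_gcd hdA hdcyc
  have chain : ∀ (n : ℕ) (e : ZMod h),
      Associated (EuclideanDomain.gcd (Apoly h a1 e) (cycPoly h a1))
        (EuclideanDomain.gcd (Apoly h a1 (e + n)) (cycPoly h a1)) := by
    intro n
    induction n with
    | zero => intro e; simpa using Associated.refl _
    | succ n ih =>
        intro e
        have := (ih e).trans (step (e + n))
        have harg : (e + n) + 1 = e + ((n + 1 : ℕ) : ZMod h) := by push_cast; ring
        rwa [harg] at this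
  refine ⟨key, ?_, ?_⟩
  · intro e e'
    have := chain (e' - e).val e
    have harg : e + (((e' - e).val : ℕ) : ZMod h) = e' := by
      rw [ZMod.natCast_val, ZMod.cast_id]; ring
    rwa [harg] at this
  · intro e
    apply associated_of_dvd_dvd
    · apply EuclideanDomain.dvd_gcd
      · exact EuclideanDomain.gcd_dvd_left _ _
      · rw [← key e]
        exact dvd_add ((EuclideanDomain.gcd_dvd_left _ _).mul_left _)
          (EuclideanDomain.gcd_dvd_right _ _)
    · apply EuclideanDomain.dvd_gcd
      · exact EuclideanDomain.gcd_dvd_left _ _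
      · have : cycPoly h a1 = Apoly h a1 (e + 1) - C (a1 (e + 1)) * X * Apoly h a1 e := by
          rw [← key e]; ring
        rw [this]
        exact dvd_sub (EuclideanDomain.gcd_dvd_right _ _)
          ((EuclideanDomain.gcd_dvd_left _ _).mul_left _)
end

section
/- With notation as above, let δ(s) be the common gcd of A^{[e]}(s) and 1 − A s^h, and define the opposite denominator polynomial Δ^{op}(s) := (1 − A s^h)/δ(s) and b^{[e]}(s) := A^{[e]}(s)/δ(s). Then the polynomials b^{[e]}(s), e ∈ ℤ/hℤ, span the K-vector space of polynomials of degree < deg Δ^{op}. Consequently, the rank of the h×h coefficient matrix M_h := (∏_{i=1}^{f} a_1^{[e−i+1]})_{e,f ∈ {0,…,h−1}} equals deg Δ^{op}(s). -/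
open Finset Polynomial

/-!
`A^{[0]}` and `1 - A sʰ` are both divisible by `δ`, and the relation
`a₁^{[e+1]} s A^{[e]} + (1 - A sʰ) = A^{[e+1]}` propagates this to every `A^{[e]}`;
dividing it by `δ` gives `b^{[e+1]} = a₁^{[e+1]} s b^{[e]} + Δ^{op}`. Hence, modulo `Δ^{op}`,
each `b^{[n]}` is a nonzero multiple of `sⁿ b^{[0]}`, and `b^{[0]}` is invertible there since it
is coprime to `Δ^{op}`. As the powers `sʲ`, `j < deg Δ^{op}`, form a basis of `K[s]/(Δ^{op})` and
every `b^{[e]}` has degree `< deg Δ^{op}`, the `b^{[e]}` span the polynomials of degree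
`< deg Δ^{op}`. The rows of `M_h` are the coefficient vectors of `A^{[e]} = δ b^{[e]}`, so the row
space is the image of that space under multiplication by `δ` followed by reading off the first
`h` coefficients, which is injective on it.
-/

theorem ZMod.prod_range_natCast_eq_prod_univ {M : Type*} [CommMonoid M] {n : ℕ} [NeZero n]
    (f : ZMod n → M) : ∏ i ∈ range n, f (i : ℕ) = ∏ x : ZMod n, f x :=
  prod_nbij' (fun i => (i : ZMod n)) ZMod.val (fun _ _ => mem_univ _)
    (fun x _ => mem_range.mpr (ZMod.val_lt x)) (fun _ hi => ZMod.val_cast_of_lt (mem_range.mp hi))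
    (fun x _ => ZMod.natCast_zmod_val x) (fun _ _ => rfl)

section General

variable {K : Type*} [Field K]

theorem LinearMap.finrank_map_of_disjoint_ker {M N : Type*} [AddCommGroup M] [Module K M]
    [AddCommGroup N] [Module K N] (f : M →ₗ[K] N) {p : Submodule K M}
    (hp : Disjoint p (LinearMap.ker f)) :
    Module.finrank K (p.map f) = Module.finrank K p := by
  rw [← LinearMap.range_domRestrict,
    LinearMap.finrank_range_of_inj (LinearMap.injective_domRestrict_iff.mpr hp)]

namespace Polynomial

theorem mul_mem_degreeLT_natDegree_add_iff {δ p : K[X]} (hδ : δ ≠ 0) {n : ℕ} :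
    δ * p ∈ degreeLT K (δ.natDegree + n) ↔ p ∈ degreeLT K n := by
  rcases eq_or_ne p 0 with rfl | hp
  · simp
  simp only [mem_degreeLT, degree_eq_natDegree hp, degree_eq_natDegree (mul_ne_zero hδ hp),
    natDegree_mul hδ hp, Nat.cast_lt]
  omega

theorem disjoint_degreeLT_ker_coeff_mul {δ : K[X]} (hδ : δ ≠ 0) {n m : ℕ}
    (hm : δ.natDegree + n ≤ m) :
    Disjoint (degreeLT K n)
      (LinearMap.ker ((LinearMap.pi fun i : Fin m => lcoeff K i) ∘ₗ LinearMap.mulLeft K δ)) := by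
  refine Submodule.disjoint_def.mpr fun p hp hker => ?_
  have hδp : δ * p ∈ degreeLT K m :=
    degreeLT_mono hm ((mul_mem_degreeLT_natDegree_add_iff hδ).mpr hp)
  have hzero : δ * p = 0 := (degreeLTEquiv_eq_zero_iff_eq_zero hδp).mp hker
  exact (mul_eq_zero.mp hzero).resolve_left hδ

theorem span_eq_degreeLT_of_span_mk_eq_top {ι : Type*} {f : K[X]} {b : ι → K[X]}
    (hb : ∀ i, b i ∈ degreeLT K f.natDegree)
    (hspan : Submodule.span K (Set.range fun i => AdjoinRoot.mk f (b i)) = ⊤) :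
    Submodule.span K (Set.range b) = degreeLT K f.natDegree := by
  have hle : Submodule.span K (Set.range b) ≤ degreeLT K f.natDegree :=
    Submodule.span_le.mpr (Set.range_subset_iff.mpr hb)
  refine le_antisymm hle fun p hp => ?_
  have hmk : AdjoinRoot.mkₐ f p ∈
      (Submodule.span K (Set.range b)).map (AdjoinRoot.mkₐ f).toLinearMap := by
    rw [← Submodule.span_image, ← Set.range_comp]
    exact hspan ▸ Submodule.mem_top
  obtain ⟨q, hq, hqp⟩ := hmk
  have hdvd : f ∣ p - q := AdjoinRoot.mk_eq_mk.mp hqp.symm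
  have hdeg : p - q ∈ degreeLT K f.natDegree := Submodule.sub_mem _ hp (hle hq)
  rcases eq_or_ne (p - q) 0 with hpq | hpq
  · exact sub_eq_zero.mp hpq ▸ hq
  · exact absurd (natDegree_le_of_dvd hdvd hpq)
      (not_le.mpr ((natDegree_lt_iff_degree_lt hpq).mpr (mem_degreeLT.mp hdeg)))

end Polynomial

theorem AdjoinRoot.isUnit_mk_of_isCoprime {R : Type*} [CommRing R] {f g : R[X]}
    (hg : IsCoprime g f) : IsUnit (AdjoinRoot.mk f g) := by
  obtain ⟨u, v, huv⟩ := hg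
  refine IsUnit.of_mul_eq_one (AdjoinRoot.mk f u) ?_
  rw [← map_mul, ← map_one (AdjoinRoot.mk f), AdjoinRoot.mk_eq_mk, ← huv]
  exact ⟨-v, by ring⟩

theorem AdjoinRoot.eq_top_of_root_pow_mul_mem {f : K[X]} (hf : f ≠ 0) {β : AdjoinRoot f}
    (hβ : IsUnit β) {S : Submodule K (AdjoinRoot f)}
    (hS : ∀ j < f.natDegree, root f ^ j * β ∈ S) : S = ⊤ := by
  obtain ⟨β, rfl⟩ := hβ
  refine eq_top_iff.mpr fun x _ => ?_
  let pb := AdjoinRoot.powerBasis hf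
  have hx : x = ∑ i, pb.basis.repr (x * ↑β⁻¹) i • (root f ^ (i : ℕ) * β) := by
    have hrepr := pb.basis.sum_repr (x * ↑β⁻¹)
    rw [PowerBasis.coe_basis] at hrepr
    simp only [← smul_mul_assoc, ← Finset.sum_mul, pb, powerBasis_gen] at hrepr ⊢
    rw [hrepr, Units.inv_mul_cancel_right]
  rw [hx]
  exact Submodule.sum_mem _ fun i _ => Submodule.smul_mem _ _ (hS i i.2)

end General

section Numerators

variable {K : Type*} [Field K] {h : ℕ} (a1 : ZMod h → K)

theorem prod_range_sub_eq_Aconst [NeZero h] (c : ZMod h) :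
    ∏ i ∈ range h, a1 (c - (i : ℕ)) = Aconst h a1 := by
  rw [Aconst, ZMod.prod_range_natCast_eq_prod_univ (fun x => a1 (c - x)),
    ZMod.prod_range_natCast_eq_prod_univ a1]
  exact Fintype.prod_equiv (Equiv.subLeft c) _ _ fun _ => rfl

theorem Apoly_succ [NeZero h] (e : ZMod h) :
    C (a1 (e + 1)) * X * Apoly h a1 e + cycPoly h a1 = Apoly h a1 (e + 1) := by
  have hterm (j : ℕ) : C (a1 (e + 1)) * X * (C (∏ i ∈ range j, a1 (e - (i : ℕ))) * X ^ j)
      = C (∏ i ∈ range (j + 1), a1 (e + 1 - (i : ℕ))) * X ^ (j + 1) := by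
    rw [prod_range_succ', Nat.cast_zero, sub_zero, mul_comm _ (a1 (e + 1)), C_mul]
    push_cast
    simp only [add_sub_add_right_eq_sub]
    ring
  have hshift := sum_range_succ' (fun j => C (∏ i ∈ range j, a1 (e + 1 - (i : ℕ))) * X ^ j) h
  rw [sum_range_succ, prod_range_sub_eq_Aconst, prod_range_zero, pow_zero, C_1, mul_one] at hshift
  simp only [Apoly, cycPoly, mul_sum, hterm]
  linear_combination -hshift

theorem coeff_Apoly (e : ZMod h) {j : ℕ} (hj : j < h) :
    (Apoly h a1 e).coeff j = ∏ i ∈ range j, a1 (e - (i : ℕ)) := by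
  simp only [Apoly, finsetSum_coeff, coeff_C_mul_X_pow, sum_ite_eq, mem_range, if_pos hj]

theorem Apoly_mem_degreeLT (e : ZMod h) : Apoly h a1 e ∈ degreeLT K h :=
  Submodule.sum_mem _ fun j hj => mem_degreeLT.mpr <|
    (degree_C_mul_X_pow_le _ _).trans_lt (by exact_mod_cast mem_range.mp hj)

variable {a1} in
theorem Aconst_ne_zero (ha1 : ∀ e, a1 e ≠ 0) : Aconst h a1 ≠ 0 :=
  prod_ne_zero_iff.mpr fun _ _ => ha1 _

theorem natDegree_cycPoly [NeZero h] (hA : Aconst h a1 ≠ 0) : (cycPoly h a1).natDegree = h := by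
  rw [cycPoly, natDegree_sub_eq_right_of_natDegree_lt] <;> rw [natDegree_C_mul_X_pow _ _ hA]
  exact natDegree_one.trans_lt (Nat.pos_of_neZero h)

end Numerators

-- The paper's `δ`, `Δ^{op}` and `b^{[e]}`.
open Classical in
noncomputable def deltaPoly {K : Type*} [Field K] (h : ℕ) (a1 : ZMod h → K) : K[X] :=
  EuclideanDomain.gcd (Apoly h a1 0) (cycPoly h a1)

noncomputable def oppDenom {K : Type*} [Field K] (h : ℕ) (a1 : ZMod h → K) : K[X] :=
  cycPoly h a1 / deltaPoly h a1

noncomputable def bPoly {K : Type*} [Field K] (h : ℕ) (a1 : ZMod h → K) (e : ZMod h) : K[X] :=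
  Apoly h a1 e / deltaPoly h a1

section Reduced

open Classical

variable {K : Type*} [Field K] {h : ℕ} [NeZero h] {a1 : ZMod h → K}

theorem deltaPoly_dvd_Apoly (e : ZMod h) : deltaPoly h a1 ∣ Apoly h a1 e := by
  obtain ⟨n, rfl⟩ := ZMod.natCast_zmod_surjective e
  induction n with
  | zero => exact Nat.cast_zero (R := ZMod h) ▸ EuclideanDomain.gcd_dvd_left _ _
  | succ n ih =>
    rw [Nat.cast_succ, ← Apoly_succ]
    exact dvd_add (ih.mul_left _) (EuclideanDomain.gcd_dvd_right _ _)

theorem cycPoly_ne_zero (hA : Aconst h a1 ≠ 0) : cycPoly h a1 ≠ 0 :=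
  ne_zero_of_natDegree_gt (natDegree_cycPoly a1 hA ▸ Nat.pos_of_neZero h)

theorem deltaPoly_ne_zero (hA : Aconst h a1 ≠ 0) : deltaPoly h a1 ≠ 0 := fun h0 =>
  cycPoly_ne_zero hA (EuclideanDomain.gcd_eq_zero_iff.mp h0).2

theorem deltaPoly_mul_bPoly (hA : Aconst h a1 ≠ 0) (e : ZMod h) :
    deltaPoly h a1 * bPoly h a1 e = Apoly h a1 e :=
  EuclideanDomain.mul_div_cancel' (deltaPoly_ne_zero hA) (deltaPoly_dvd_Apoly e)

theorem deltaPoly_mul_oppDenom (hA : Aconst h a1 ≠ 0) :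
    deltaPoly h a1 * oppDenom h a1 = cycPoly h a1 :=
  EuclideanDomain.mul_div_cancel' (deltaPoly_ne_zero hA) (EuclideanDomain.gcd_dvd_right _ _)

theorem oppDenom_ne_zero (hA : Aconst h a1 ≠ 0) : oppDenom h a1 ≠ 0 :=
  right_ne_zero_of_mul (deltaPoly_mul_oppDenom hA ▸ cycPoly_ne_zero hA)

theorem natDegree_deltaPoly_add_natDegree_oppDenom (hA : Aconst h a1 ≠ 0) :
    (deltaPoly h a1).natDegree + (oppDenom h a1).natDegree = h := by
  rw [← natDegree_mul (deltaPoly_ne_zero hA) (oppDenom_ne_zero hA), deltaPoly_mul_oppDenom hA,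
    natDegree_cycPoly a1 hA]

theorem bPoly_mem_degreeLT (hA : Aconst h a1 ≠ 0) (e : ZMod h) :
    bPoly h a1 e ∈ degreeLT K (oppDenom h a1).natDegree := by
  rw [← mul_mem_degreeLT_natDegree_add_iff (deltaPoly_ne_zero hA), deltaPoly_mul_bPoly hA,
    natDegree_deltaPoly_add_natDegree_oppDenom hA]
  exact Apoly_mem_degreeLT a1 e

theorem bPoly_succ (hA : Aconst h a1 ≠ 0) (e : ZMod h) :
    C (a1 (e + 1)) * X * bPoly h a1 e + oppDenom h a1 = bPoly h a1 (e + 1) := by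
  refine mul_left_cancel₀ (deltaPoly_ne_zero hA) ?_
  rw [deltaPoly_mul_bPoly hA, ← Apoly_succ, ← deltaPoly_mul_bPoly hA, ← deltaPoly_mul_oppDenom hA]
  ring

theorem isCoprime_bPoly_zero_oppDenom (hA : Aconst h a1 ≠ 0) :
    IsCoprime (bPoly h a1 0) (oppDenom h a1) :=
  let _ := EuclideanDomain.gcdMonoid K[X]
  isCoprime_div_gcd_div_gcd (cycPoly_ne_zero hA)

theorem mk_bPoly_natCast (hA : Aconst h a1 ≠ 0) (n : ℕ) :
    AdjoinRoot.mk (oppDenom h a1) (bPoly h a1 n)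
      = (∏ i ∈ range n, a1 ((i : ZMod h) + 1)) •
        (AdjoinRoot.root (oppDenom h a1) ^ n * AdjoinRoot.mk (oppDenom h a1) (bPoly h a1 0)) := by
  induction n with
  | zero => simp
  | succ n ih =>
    rw [Nat.cast_succ, ← bPoly_succ hA, map_add, AdjoinRoot.mk_self, add_zero, map_mul, map_mul,
      AdjoinRoot.mk_C, AdjoinRoot.mk_X, ih, prod_range_succ, Algebra.smul_def, Algebra.smul_def,
      map_mul, AdjoinRoot.algebraMap_eq]
    ring

theorem span_range_bPoly_eq_degreeLT (ha1 : ∀ e, a1 e ≠ 0) :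
    Submodule.span K (Set.range (bPoly h a1)) = degreeLT K (oppDenom h a1).natDegree := by
  have hA := Aconst_ne_zero ha1
  refine span_eq_degreeLT_of_span_mk_eq_top (bPoly_mem_degreeLT hA) ?_
  refine AdjoinRoot.eq_top_of_root_pow_mul_mem (oppDenom_ne_zero hA)
    (AdjoinRoot.isUnit_mk_of_isCoprime (isCoprime_bPoly_zero_oppDenom hA)) fun j _ => ?_
  have hc : ∏ i ∈ range j, a1 ((i : ZMod h) + 1) ≠ 0 := prod_ne_zero_iff.mpr fun _ _ => ha1 _
  rw [← inv_smul_smul₀ hc (_ * _), ← mk_bPoly_natCast hA]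
  exact Submodule.smul_mem _ _ (Submodule.subset_span ⟨j, rfl⟩)

theorem rank_coeffMatrix_eq_natDegree_oppDenom (ha1 : ∀ e, a1 e ≠ 0) :
    (Matrix.of fun e f : Fin h => ∏ i ∈ range (f : ℕ), a1 (((e : ℕ) : ZMod h) - (i : ℕ))).rank
      = (oppDenom h a1).natDegree := by
  have hA := Aconst_ne_zero ha1
  set ψ := (LinearMap.pi fun i : Fin h => lcoeff K i) ∘ₗ LinearMap.mulLeft K (deltaPoly h a1)
  have hrows :
      (Matrix.of fun e f : Fin h => ∏ i ∈ range (f : ℕ), a1 (((e : ℕ) : ZMod h) - (i : ℕ)))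
        = (ψ ∘ bPoly h a1) ∘ fun e : Fin h => ((e : ℕ) : ZMod h) := by
    ext e f
    simp [ψ, deltaPoly_mul_bPoly hA, coeff_Apoly _ _ f.isLt]
  have hcast : Function.Surjective fun e : Fin h => ((e : ℕ) : ZMod h) :=
    fun x => ⟨⟨x.val, x.val_lt⟩, ZMod.natCast_zmod_val x⟩
  rw [Matrix.rank_eq_finrank_span_row, Matrix.row, hrows, hcast.range_comp, Set.range_comp,
    Submodule.span_image, span_range_bPoly_eq_degreeLT ha1,
    LinearMap.finrank_map_of_disjoint_ker _ (disjoint_degreeLT_ker_coeff_mul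
      (deltaPoly_ne_zero hA) (natDegree_deltaPoly_add_natDegree_oppDenom hA).le),
    (degreeLTEquiv K _).finrank_eq, Module.finrank_fin_fun]

end Reduced

open Classical in
/-- With `δ = gcd(A^{[e]}, 1 − A sʰ)` and `Δ^{op} = (1 − A sʰ)/δ`, the polynomials
    `b^{[e]} = A^{[e]}/δ` span the space of polynomials of degree `< deg Δ^{op}`;
    consequently the coefficient matrix `M_h` has rank `deg Δ^{op}`. -/
theorem span_b_and_rank {K : Type*} [Field K] (h : ℕ) (hpos : 0 < h)
    (a1 : ZMod h → K) (ha1 : ∀ e, a1 e ≠ 0) :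
    (Submodule.span K
        (Set.range fun e : ZMod h =>
          Apoly h a1 e / EuclideanDomain.gcd (Apoly h a1 0) (cycPoly h a1))
      = Polynomial.degreeLT K
          ((cycPoly h a1 / EuclideanDomain.gcd (Apoly h a1 0) (cycPoly h a1)).natDegree)) ∧
    Matrix.rank
        (Matrix.of fun e f : Fin h =>
          ∏ i ∈ Finset.range (f : ℕ), a1 (((e : ℕ) : ZMod h) - (i : ℕ)))
      = (cycPoly h a1 / EuclideanDomain.gcd (Apoly h a1 0) (cycPoly h a1)).natDegree := by
  have : NeZero h := ⟨hpos.ne'⟩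
  exact ⟨span_range_bPoly_eq_degreeLT ha1, rank_coeffMatrix_eq_natDegree_oppDenom ha1⟩
end

section
/- Let P(t) = ∑ γ_n t^n be holomorphic on the open unit disc and extend meromorphically to a neighbourhood of the closed unit disc, with all poles on the unit circle. Suppose P is tame and simply accumulating with Ω(P) = {1/(1−s)} (i.e. γ_{n−1}/γ_n → 1). Then among the poles of P on the unit circle of maximal order d_m, the only one is at t = 1; that is, the top denominator polynomial Δ_P^{top}(t) equals t − 1. -/
open Filter Topology Finset Asymptotics
open scoped NNReal

/-!
Expanding the poles, `γ n = ∑ c i j (-x i)⁻ʲ C(n + j - 1, j - 1) (x i)⁻ⁿ + q n`, where `q` are the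
Taylor coefficients of `Q`, which decay geometrically because `Q` is holomorphic beyond the unit
circle. Without poles this decay contradicts `γ (n - 1) / γ n → 1`. Otherwise let `D` be the
maximal order: then `w n = γ n / C(n + D - 1, D - 1)` differs by `o(1)` from
`∑_{d i = D} b i (x i)⁻ⁿ` with `b i ≠ 0`, so it is bounded, and `w n / w (n + 1) → 1` then forces `w n - w (n + 1) → 0`.
Hence `∑ b i (1 - (x i)⁻¹) (x i)⁻ⁿ → 0`, and since the `(x i)⁻¹` are distinct of modulus one, all
`b i (1 - (x i)⁻¹)` vanish, i.e. `x i = 1`.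
-/

section Sequences

variable {𝕜 : Type*} [NormedField 𝕜]

theorem eq_zero_of_tendsto_sum_mul_pow {ι : Type*} {s : Finset ι} {c lam : ι → 𝕜}
    (hlam : ∀ i ∈ s, 1 ≤ ‖lam i‖) (hinj : Set.InjOn lam s)
    (h : Tendsto (fun n => ∑ i ∈ s, c i * lam i ^ n) atTop (𝓝 0)) : ∀ i ∈ s, c i = 0 := by
  classical
  induction s using Finset.induction_on generalizing c with
  | empty => simp
  | @insert a s ha ih =>
    rw [coe_insert, Set.injOn_insert (mt mem_coe.1 ha)] at hinj
    -- Shifting `n` and subtracting `lam a` times the sum kills the `a`-term and multiplies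
    -- the others by `lam i - lam a`.
    have hrest : Tendsto (fun n => ∑ i ∈ s, c i * (lam i - lam a) * lam i ^ n) atTop (𝓝 0) := by
      have := (h.comp (tendsto_add_atTop_nat 1)).sub (h.const_mul (lam a))
      rw [mul_zero, sub_zero] at this
      refine this.congr fun n => ?_
      have hterm : ∀ i, c i * (lam i - lam a) * lam i ^ n
          = c i * lam i ^ (n + 1) - lam a * (c i * lam i ^ n) := fun i => by ring
      simp only [Function.comp_apply, sum_insert ha, mul_add, mul_sum, hterm, sum_sub_distrib]
      ring
    have hs : ∀ i ∈ s, c i = 0 := fun i hi =>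
      (mul_eq_zero.1 (ih (fun i hi => hlam i (mem_insert_of_mem hi)) hinj.1 hrest i hi))
        |>.resolve_right (sub_ne_zero.2 fun hia => hinj.2 ⟨i, hi, hia⟩)
    have ha0 : Tendsto (fun n => c a * lam a ^ n) atTop (𝓝 0) := by
      have hs0 : ∀ n, ∑ i ∈ s, c i * lam i ^ n = 0 := fun n =>
        sum_eq_zero fun i hi => by rw [hs i hi, zero_mul]
      simpa [sum_insert ha, hs0] using h
    have hca : ‖c a‖ ≤ 0 := norm_zero (E := 𝕜) ▸ ge_of_tendsto' ha0.norm fun n => by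
      rw [norm_mul, norm_pow]
      exact le_mul_of_one_le_right (norm_nonneg _) (one_le_pow₀ (hlam a (mem_insert_self a s)))
    intro i hi
    rcases mem_insert.1 hi with rfl | hi
    · exact norm_le_zero_iff.1 hca
    · exact hs i hi

theorem tendsto_sub_succ_of_tendsto_div_succ {u : ℕ → 𝕜} (hu : u =O[atTop] fun _ => (1 : ℝ))
    (h : Tendsto (fun n => u n / u (n + 1)) atTop (𝓝 1)) :
    Tendsto (fun n => u n - u (n + 1)) atTop (𝓝 0) := by
  have hsmall : (fun n => u n / u (n + 1) - 1) =o[atTop] fun _ => (1 : ℝ) :=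
    (isLittleO_one_iff ℝ).2 (by simpa using h.sub_const 1)
  have hprod := (hu.comp_tendsto (tendsto_add_atTop_nat 1)).mul_isLittleO hsmall
  simp only [mul_one] at hprod
  refine ((isLittleO_one_iff ℝ).1 hprod).congr' ?_
  filter_upwards [h.eventually_ne one_ne_zero] with n hn
  have hu1 : u (n + 1) ≠ 0 := fun h0 => by simp [h0] at hn
  simp only [Function.comp_apply]
  field_simp

theorem tendsto_div_div_succ {u v : ℕ → 𝕜} (hu : Tendsto (fun n => u n / u (n + 1)) atTop (𝓝 1))
    (hv : Tendsto (fun n => v n / v (n + 1)) atTop (𝓝 1)) :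
    Tendsto (fun n => u n / v n / (u (n + 1) / v (n + 1))) atTop (𝓝 1) := by
  have := hu.div hv one_ne_zero
  rw [div_one] at this
  exact this.congr fun n => div_div_div_comm _ _ _ _

theorem not_summable_norm_mul_pow {γ : ℕ → 𝕜}
    (h : Tendsto (fun n => γ n / γ (n + 1)) atTop (𝓝 1)) {r : ℝ} (hr : 1 < r) :
    ¬Summable fun n => ‖γ n‖ * r ^ n := by
  refine not_summable_of_ratio_test_tendsto_gt_one hr ?_
  have hnorm : Tendsto (fun n => ‖γ (n + 1)‖ / ‖γ n‖ * r) atTop (𝓝 r) := by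
    simpa [inv_div] using (h.inv₀ one_ne_zero).norm.mul_const r
  refine hnorm.congr fun n => ?_
  have hr0 : r ^ n ≠ 0 := pow_ne_zero n (by linarith)
  rw [Real.norm_of_nonneg (by positivity), Real.norm_of_nonneg (by positivity), mul_div_mul_comm,
    pow_succ, mul_div_cancel_left₀ r hr0]

theorem eq_one_of_tendsto_sub_sum_mul_pow {ι : Type*} {s : Finset ι} {b lam : ι → 𝕜}
    {w : ℕ → 𝕜} (hlam : ∀ i ∈ s, ‖lam i‖ = 1) (hinj : Set.InjOn lam s)
    (hw : Tendsto (fun n => w n / w (n + 1)) atTop (𝓝 1))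
    (hS : Tendsto (fun n => w n - ∑ i ∈ s, b i * lam i ^ n) atTop (𝓝 0)) :
    ∀ i ∈ s, b i ≠ 0 → lam i = 1 := by
  set S : ℕ → 𝕜 := fun n => ∑ i ∈ s, b i * lam i ^ n
  have hSbdd : S =O[atTop] fun _ => (1 : ℝ) := by
    refine IsBigO.of_bound (∑ i ∈ s, ‖b i‖) (Eventually.of_forall fun n => ?_)
    refine (norm_sum_le _ _).trans (le_of_eq ?_)
    simp +contextual [hlam]
  have hdiff := tendsto_sub_succ_of_tendsto_div_succ
    (((hS.isBigO_one ℝ).add hSbdd).congr_left fun n => sub_add_cancel (w n) (S n)) hw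
  have hS' : Tendsto (fun n => ∑ i ∈ s, b i * (1 - lam i) * lam i ^ n) atTop (𝓝 0) := by
    have := (hdiff.sub hS).add (hS.comp (tendsto_add_atTop_nat 1))
    rw [sub_zero, add_zero] at this
    refine this.congr fun n => ?_
    have hterm : ∀ i, b i * (1 - lam i) * lam i ^ n = b i * lam i ^ n - b i * lam i ^ (n + 1) :=
      fun i => by ring
    simp only [Function.comp_apply, hterm, sum_sub_distrib]
    ring
  intro i hi hb
  have := eq_zero_of_tendsto_sum_mul_pow (fun i hi => (hlam i hi).ge) hinj hS' i hi
  exact (sub_eq_zero.1 ((mul_eq_zero.1 this).resolve_left hb)).symm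

end Sequences

theorem tendsto_choose_div_choose_of_lt {m k : ℕ} (hmk : m < k) :
    Tendsto (fun n : ℕ => ((n + m).choose m : ℝ) / (n + k).choose k) atTop (𝓝 0) := by
  obtain ⟨k, rfl⟩ : ∃ k', k = k' + 1 := ⟨k - 1, by omega⟩
  have hbound : ∀ n : ℕ, ((n + m).choose m : ℝ) / (n + (k + 1)).choose (k + 1)
      ≤ (k + 1) / (n + (k + 1)) := fun n => by
    have hpos : (0 : ℝ) < (n + (k + 1)).choose (k + 1) := by
      exact_mod_cast Nat.choose_pos (by omega)
    have hmono : (n + m).choose m ≤ (n + k).choose k := by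
      rw [← Nat.choose_symm_add, ← Nat.choose_symm_add (a := n)]
      exact Nat.choose_le_choose n (by omega)
    have hstep : ((n + k + 1 : ℕ) : ℝ) * (n + k).choose k
        = (n + (k + 1)).choose (k + 1) * (k + 1 : ℕ) := by
      exact_mod_cast Nat.add_one_mul_choose_eq (n + k) k
    rw [div_le_div_iff₀ hpos (by positivity)]
    push_cast at hstep
    calc ((n + m).choose m : ℝ) * (n + (k + 1)) ≤ (n + k).choose k * (n + k + 1) := by
          rw [← add_assoc]
          gcongr
      _ = _ := by linear_combination hstep
  refine squeeze_zero (fun n => by positivity) hbound ?_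
  exact tendsto_const_nhds.div_atTop (tendsto_atTop_add_const_right _ _ tendsto_natCast_atTop_atTop)

theorem tendsto_choose_div_choose_succ {𝕜 : Type*} [RCLike 𝕜] (k : ℕ) :
    Tendsto (fun n : ℕ => ((n + k).choose k : 𝕜) / (n + 1 + k).choose k) atTop (𝓝 1) := by
  refine ((tendsto_natCast_div_add_atTop (k : 𝕜)).comp (tendsto_add_atTop_nat 1)).congr fun n => ?_
  have hpos : ((n + 1 + k).choose k : 𝕜) ≠ 0 := by exact_mod_cast (Nat.choose_pos (by omega)).ne'
  have hstep := Nat.choose_mul_succ_eq (n + k) k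
  rw [show n + k + 1 - k = n + 1 by omega, show n + k + 1 = n + 1 + k by omega] at hstep
  rw [Function.comp_apply, div_eq_div_iff (by exact_mod_cast (by omega : n + 1 + k ≠ 0)) hpos]
  have := congrArg (Nat.cast : ℕ → 𝕜) hstep
  push_cast at this ⊢
  linear_combination -this

section PoleCoeff

variable {𝕜 : Type*}

/-- The `n`-th Taylor coefficient at `0` of `1 / (t - x) ^ j`, for `1 ≤ j`. -/
def poleCoeff [Field 𝕜] (x : 𝕜) (j n : ℕ) : 𝕜 :=
  (-x)⁻¹ ^ j * (n + (j - 1)).choose (j - 1) * x⁻¹ ^ n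

theorem hasSum_poleCoeff_mul_pow [NormedField 𝕜] [HasSummableGeomSeries 𝕜] {x z : 𝕜} {j : ℕ}
    (hj : 1 ≤ j) (hz : ‖z‖ < ‖x‖) :
    HasSum (fun n => poleCoeff x j n * z ^ n) (1 / (z - x) ^ j) := by
  obtain ⟨k, rfl⟩ : ∃ k, j = k + 1 := ⟨j - 1, by omega⟩
  have hx : x ≠ 0 := norm_pos_iff.1 ((norm_nonneg z).trans_lt hz)
  have hzx : ‖z / x‖ < 1 := by rwa [norm_div, div_lt_one ((norm_nonneg z).trans_lt hz)]
  have hsum := (hasSum_choose_mul_geometric_of_norm_lt_one k hzx).mul_left ((-x)⁻¹ ^ (k + 1))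
  have hval : (-x)⁻¹ ^ (k + 1) * (1 / (1 - z / x) ^ (k + 1)) = 1 / (z - x) ^ (k + 1) := by
    have hfac : z - x = -x * (1 - z / x) := by field_simp; ring
    rw [hfac, mul_pow, one_div, one_div, mul_inv, inv_pow]
  have hterm : (fun n => poleCoeff x (k + 1) n * z ^ n)
      = fun n => (-x)⁻¹ ^ (k + 1) * ((n + k).choose k * (z / x) ^ n) := funext fun n => by
    simp only [poleCoeff, add_tsub_cancel_right, div_eq_mul_inv, mul_pow]
    ring
  rwa [hterm, ← hval]

theorem tendsto_poleCoeff_div_choose [RCLike 𝕜] {x : 𝕜} (hx : ‖x‖ = 1) {j K : ℕ} (hj : 1 ≤ j)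
    (hjK : j ≤ K + 1) :
    Tendsto (fun n => poleCoeff x j n / (n + K).choose K
      - if j = K + 1 then (-x)⁻¹ ^ j * x⁻¹ ^ n else 0) atTop (𝓝 0) := by
  split_ifs with hjK'
  · subst hjK'
    refine tendsto_const_nhds.congr fun n => ?_
    have hC : ((n + K).choose K : 𝕜) ≠ 0 := by exact_mod_cast (Nat.choose_pos (by omega)).ne'
    simp only [poleCoeff, add_tsub_cancel_right]
    field_simp
    ring
  · rw [tendsto_zero_iff_norm_tendsto_zero]
    refine (tendsto_choose_div_choose_of_lt (by omega : j - 1 < K)).congr fun n => ?_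
    simp [poleCoeff, hx]

theorem tendsto_sum_poleCoeff_div_choose_sub [RCLike 𝕜] {ι : Type*} [Fintype ι] {x : ι → 𝕜}
    (hx : ∀ i, ‖x i‖ = 1) {d : ι → ℕ} {K : ℕ} (hd : ∀ i, d i ≤ K + 1) (c : ι → ℕ → 𝕜)
    {q : ℕ → 𝕜} (hq : Tendsto q atTop (𝓝 0)) :
    Tendsto (fun n => (∑ i, ∑ j ∈ Icc 1 (d i), c i j * poleCoeff (x i) j n + q n) / (n + K).choose K
      - ∑ i with K + 1 ≤ d i, c i (K + 1) * (-x i)⁻¹ ^ (K + 1) * (x i)⁻¹ ^ n) atTop (𝓝 0) := by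
  have hpoles : Tendsto (fun n => ∑ i, ∑ j ∈ Icc 1 (d i), c i j * (poleCoeff (x i) j n /
      (n + K).choose K - if j = K + 1 then (-x i)⁻¹ ^ j * (x i)⁻¹ ^ n else 0)) atTop (𝓝 0) := by
    simpa using tendsto_finsetSum _ fun i _ => tendsto_finsetSum _ fun j hj =>
      (tendsto_poleCoeff_div_choose (hx i) (mem_Icc.1 hj).1
        ((mem_Icc.1 hj).2.trans (hd i))).const_mul (c i j)
  have hrest : Tendsto (fun n => q n / (n + K).choose K) atTop (𝓝 0) := by
    refine squeeze_zero_norm (fun n => ?_) (tendsto_zero_iff_norm_tendsto_zero.1 hq)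
    rw [norm_div, RCLike.norm_natCast]
    exact div_le_self (norm_nonneg _) (Nat.one_le_cast.2 (Nat.choose_pos (by omega)))
  have := hpoles.add hrest
  rw [add_zero] at this
  refine this.congr fun n => ?_
  simp only [mul_sub, sum_sub_distrib, mul_ite, mul_zero, sum_ite_eq', mem_Icc, sum_filter,
    add_div, sum_div, mul_div_assoc, Nat.le_add_left, true_and, mul_assoc]
  ring

end PoleCoeff

theorem summable_norm_mul_pow_of_hasSum {q : ℕ → ℂ} {Q : ℂ → ℂ} {s ρ : ℝ} (hs : 0 < s)
    (hsum : ∀ z : ℂ, ‖z‖ < s → HasSum (fun n => q n * z ^ n) (Q z))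
    (hQ : DifferentiableOn ℂ Q (Metric.ball 0 ρ)) {r : ℝ≥0} (hr : (r : ℝ) < ρ) :
    Summable fun n => ‖q n‖ * (r : ℝ) ^ n := by
  obtain ⟨R, hrR, hRρ⟩ := exists_between hr
  lift R to ℝ≥0 using r.2.trans hrR.le
  have hQR := (hQ.mono (Metric.closedBall_subset_ball hRρ)).hasFPowerSeriesOnBall
    (r.2.trans_lt hrR)
  obtain ⟨t, ht0, ht⟩ : ∃ t : ℝ≥0, 0 < t ∧ (t : ℝ) < s :=
    ⟨(s / 2).toNNReal, by simpa using hs, by rw [Real.coe_toNNReal _ (by positivity)]; linarith⟩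
  have hqt : HasFPowerSeriesOnBall Q (.ofScalars ℂ q) 0 t :=
    { r_le := by
        refine FormalMultilinearSeries.le_radius_of_summable_norm _ ?_
        simpa [FormalMultilinearSeries.ofScalars_norm] using
          (hsum t (by simpa using ht)).summable.norm
      r_pos := by simpa using ht0
      hasSum := fun {y} hy => by
        rw [Metric.eball_coe, mem_ball_zero_iff] at hy
        simpa [FormalMultilinearSeries.ofScalars_apply_eq, mul_comm] using hsum y (hy.trans ht) }
  have hp := hqt.hasFPowerSeriesAt.eq_formalMultilinearSeries hQR.hasFPowerSeriesAt
  have hrad : (r : ENNReal) < (FormalMultilinearSeries.ofScalars ℂ q).radius :=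
    hp ▸ (ENNReal.coe_lt_coe.2 hrR).trans_le hQR.r_le
  simpa [FormalMultilinearSeries.ofScalars_norm] using
    (FormalMultilinearSeries.ofScalars ℂ q).summable_norm_mul_pow hrad

theorem summable_norm_sub_poleCoeff_mul_pow {ι : Type*} [Fintype ι] {γ : ℕ → ℂ} {x : ι → ℂ}
    (hx : ∀ i, 1 ≤ ‖x i‖) {d : ι → ℕ} {c : ι → ℕ → ℂ} {Q : ℂ → ℂ} {ρ : ℝ}
    (hQ : DifferentiableOn ℂ Q (Metric.ball 0 ρ))
    (hrep : ∀ z : ℂ, ‖z‖ < 1 →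
      HasSum (fun n => γ n * z ^ n) ((∑ i, ∑ j ∈ Icc 1 (d i), c i j / (z - x i) ^ j) + Q z))
    {r : ℝ≥0} (hr : (r : ℝ) < ρ) :
    Summable fun n =>
      ‖γ n - ∑ i, ∑ j ∈ Icc 1 (d i), c i j * poleCoeff (x i) j n‖ * (r : ℝ) ^ n := by
  refine summable_norm_mul_pow_of_hasSum one_pos (fun z hz => ?_) hQ hr
  have hpoles : HasSum (fun n => ∑ i, ∑ j ∈ Icc 1 (d i), c i j * (poleCoeff (x i) j n * z ^ n))
      (∑ i, ∑ j ∈ Icc 1 (d i), c i j / (z - x i) ^ j) :=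
    hasSum_sum fun i _ => hasSum_sum fun j hj => by
      simpa only [mul_one_div] using (hasSum_poleCoeff_mul_pow (mem_Icc.1 hj).1
        (hz.trans_le (hx i))).mul_left (c i j)
  have hsub := (hrep z hz).sub hpoles
  rw [add_sub_cancel_left] at hsub
  have hterm : (fun n => (γ n - ∑ i, ∑ j ∈ Icc 1 (d i), c i j * poleCoeff (x i) j n) * z ^ n)
      = fun n => γ n * z ^ n - ∑ i, ∑ j ∈ Icc 1 (d i), c i j * (poleCoeff (x i) j n * z ^ n) :=
    funext fun n => by simp only [sub_mul, sum_mul, mul_assoc]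
  rw [hterm]
  exact hsub

theorem top_pole_at_one_general (γ : ℕ → ℂ)
    (hratio : Tendsto (fun n => γ (n - 1) / γ n) atTop (nhds 1))
    (Npoles : ℕ) (x : Fin Npoles → ℂ) (hx : ∀ i, ‖x i‖ = 1) (hinj : Function.Injective x)
    (d : Fin Npoles → ℕ)
    (c : Fin Npoles → ℕ → ℂ) (hc : ∀ i, c i (d i) ≠ 0)
    (Q : ℂ → ℂ) (ρ : ℝ) (hρ : 1 < ρ) (hQ : DifferentiableOn ℂ Q (Metric.ball 0 ρ))
    (hrep : ∀ z : ℂ, ‖z‖ < 1 →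
      HasSum (fun n => γ n * z ^ n)
        ((∑ i, ∑ j ∈ Finset.Icc 1 (d i), c i j / (z - x i) ^ j) + Q z)) :
    (∀ i, (∀ j, d j ≤ d i) → x i = 1) ∧ (∃ i, (∀ j, d j ≤ d i) ∧ x i = 1) := by
  set q : ℕ → ℂ := fun n => γ n - ∑ i, ∑ j ∈ Icc 1 (d i), c i j * poleCoeff (x i) j n
  have hq : ∀ r : ℝ≥0, (r : ℝ) < ρ → Summable fun n => ‖q n‖ * (r : ℝ) ^ n := fun r =>
    summable_norm_sub_poleCoeff_mul_pow (fun i => (hx i).ge) hQ hrep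
  have hγ : Tendsto (fun n => γ n / γ (n + 1)) atTop (𝓝 1) := by
    simpa [Function.comp_def] using hratio.comp (tendsto_add_atTop_nat 1)
  obtain ⟨i₀, hi₀⟩ : ∃ i, d i ≠ 0 := by
    by_contra! h
    obtain ⟨r, h1r, hrρ⟩ := exists_between hρ
    lift r to ℝ≥0 using zero_le_one.trans h1r.le
    exact not_summable_norm_mul_pow hγ h1r (by simpa [q, h] using hq r hrρ)
  have : Nonempty (Fin Npoles) := ⟨i₀⟩
  obtain ⟨imax, hmax⟩ := Finite.exists_max d
  obtain ⟨K, hK⟩ : ∃ K, d imax = K + 1 := Nat.exists_eq_succ_of_ne_zero (by grind)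
  have hq0 : Tendsto q atTop (𝓝 0) := tendsto_zero_iff_norm_tendsto_zero.2
    (by simpa using (hq 1 (by simpa using hρ)).tendsto_atTop_zero)
  have hA := tendsto_sum_poleCoeff_div_choose_sub hx (fun i => hK ▸ hmax i) c hq0
  simp only [q, add_sub_cancel] at hA
  have hone := eq_one_of_tendsto_sub_sum_mul_pow (b := fun i => c i (K + 1) * (-x i)⁻¹ ^ (K + 1))
    (lam := fun i => (x i)⁻¹) (w := fun n => γ n / ((n + K).choose K : ℂ))
    (fun i _ => by simp [hx]) (inv_injective.comp hinj).injOn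
    (tendsto_div_div_succ hγ (tendsto_choose_div_choose_succ K)) hA
  have htop : ∀ i, (∀ j, d j ≤ d i) → x i = 1 := fun i hi => by
    have hdi : d i = K + 1 := le_antisymm (hK ▸ hmax i) (hK ▸ hi imax)
    have hx0 : x i ≠ 0 := norm_ne_zero_iff.1 (by simp [hx])
    simpa using hone i (by simp [hdi]) (mul_ne_zero (hdi ▸ hc i) (by simpa))
  exact ⟨htop, imax, hmax, htop imax hmax⟩

/-- If `P = ∑ γ_n tⁿ` is meromorphic on a neighbourhood of the closed unit disc with
    all poles `x i` (of order `d i`) on the unit circle, is tame and simply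
    accumulating with `γ_{n-1}/γ_n → 1`, then the unique pole of maximal order is at
    `t = 1` (i.e. `Δ_P^{top}(t) = t − 1`). -/
theorem top_pole_at_one (γ : ℕ → ℂ) (N₀ : ℕ) (hne : ∀ n ≥ N₀, γ n ≠ 0)
    (hratio : Tendsto (fun n => γ (n - 1) / γ n) atTop (nhds 1))
    (Npoles : ℕ) (x : Fin Npoles → ℂ) (hx : ∀ i, ‖x i‖ = 1) (hinj : Function.Injective x)
    (d : Fin Npoles → ℕ) (hd : ∀ i, 1 ≤ d i)
    (c : Fin Npoles → ℕ → ℂ) (hc : ∀ i, c i (d i) ≠ 0)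
    (Q : ℂ → ℂ) (ρ : ℝ) (hρ : 1 < ρ) (hQ : DifferentiableOn ℂ Q (Metric.ball 0 ρ))
    (hrep : ∀ z : ℂ, ‖z‖ < 1 →
      HasSum (fun n => γ n * z ^ n)
        ((∑ i, ∑ j ∈ Finset.Icc 1 (d i), c i j / (z - x i) ^ j) + Q z)) :
    (∀ i, (∀ j, d j ≤ d i) → x i = 1) ∧ (∃ i, (∀ j, d j ≤ d i) ∧ x i = 1) :=
  top_pole_at_one_general γ hratio Npoles x hx hinj d c hc Q ρ hρ hQ hrep
end
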